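/- arXiv:1609.06832 — 9 statements merged into one kernel-verified Lean document; each statement's English description precedes it below -/
import Mathlib

section
/- Let C and D be categories, let F be a map from the objects of D to the objects of C and G a map from the objects of C to the objects of D, and suppose that for every pair of objects (Y, X) with Y in D and X in C such that Hom_C(F(Y), X) is nonempty there is a map Φ_{Y,X} : Hom_C(F(Y), X) → Hom_D(Y, G(X)) with the following property (PA): for every object X of C, all objects D0, E of D, every u ∈ Hom_C(F(D0), X) and every f ∈ Hom_D(E, D0) there exists v ∈ Hom_C(F(E), F(D0)) such that Φ_{D0,X}(u) ∘ f = Φ_{E,X}(u ∘ v). If C has the Ramsey property, then D has the Ramsey property. -/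
open CategoryTheory

universe v₁ v₂ u₁ u₂

/-- A category `C` has the Ramsey property if for every number of colors `k ≥ 2` and
all objects `A B : C` with `Hom(A, B)` nonempty there is an object `Z` such that for every
`k`-coloring of `Hom(A, Z)` there are a morphism `w : B ⟶ Z` and a color `i` such that
`χ (g ≫ w) = i` for every `g : A ⟶ B`. -/
def RamseyProp (C : Type u₁) [Category.{v₁} C] : Prop :=
  ∀ k : ℕ, 2 ≤ k → ∀ A B : C, Nonempty (A ⟶ B) →
    ∃ Z : C, ∀ χ : (A ⟶ Z) → Fin k, ∃ w : B ⟶ Z, ∃ i : Fin k,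
      ∀ g : A ⟶ B, χ (g ≫ w) = i

/-- If there is a pre-adjunction `F : Ob(D) ⇄ Ob(C) : G` (object maps `F`, `G` together with
a family of maps `Φ_{Y,X} : Hom_C(F Y, X) → Hom_D(Y, G X)` satisfying the condition (PA)),
and `C` has the Ramsey property, then `D` has the Ramsey property. -/
theorem ramsey_of_preadjunction
    {C : Type u₁} [Category.{v₁} C] {D : Type u₂} [Category.{v₂} D]
    (F : D → C) (G : C → D)
    (Φ : ∀ (Y : D) (X : C), (F Y ⟶ X) → (Y ⟶ G X))
    (hPA : ∀ (X : C) (D₀ E : D) (u : F D₀ ⟶ X) (f : E ⟶ D₀),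
      ∃ v : F E ⟶ F D₀, f ≫ Φ D₀ X u = Φ E X (v ≫ u))
    (hC : RamseyProp C) : RamseyProp D := by
  intro k hk A B ⟨f⟩
  obtain ⟨v₀, -⟩ := hPA (F B) B A (𝟙 (F B)) f
  obtain ⟨Z, hZ⟩ := hC k hk (F A) (F B) ⟨v₀ ≫ 𝟙 (F B)⟩
  refine ⟨G Z, fun χ => ?_⟩
  obtain ⟨w, i, hw⟩ := hZ (fun h => χ (Φ A Z h))
  refine ⟨Φ B Z w, i, fun g => ?_⟩
  obtain ⟨v, hv⟩ := hPA Z B A w g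
  rw [hv]
  exact hw v
end

section
/- (Graham–Rothschild Theorem) Let A be a finite alphabet and let m, ℓ ≥ 1 and k ≥ 2 be integers. Then there exists a positive integer n such that for every partition of W^n_ℓ(A) into k classes Σ_1, …, Σ_k there exist u ∈ W^n_m(A) and an index j such that {u · v : v ∈ W^m_ℓ(A)} ⊆ Σ_j. -/
/-- An `m`-parameter word of length `n` over the alphabet `A` (with variables `x_1, …, x_m`
encoded as elements of `Fin m`): every variable occurs at least once, and the first occurrence
of `x_i` precedes the first occurrence of `x_j` whenever `i < j` (expressed equivalently:
before every occurrence of `x_j` there is an occurrence of `x_i`). -/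
def IsParamWord {A : Type} {n m : ℕ} (w : Fin n → A ⊕ Fin m) : Prop :=
  (∀ i : Fin m, ∃ p, w p = Sum.inr i) ∧
  (∀ i j : Fin m, i < j → ∀ q, w q = Sum.inr j → ∃ p, p < q ∧ w p = Sum.inr i)

/-- The composition `u · v` of parameter words: substitute `v i` for each occurrence of the
variable `x_i` in `u`, simultaneously for all `i`. -/
def compWord {A : Type} {n m l : ℕ} (u : Fin n → A ⊕ Fin m) (v : Fin m → A ⊕ Fin l) :
    Fin n → A ⊕ Fin l :=
  fun p => Sum.elim Sum.inl v (u p)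

/-!
Induction on the number `l` of parameters of the coloured words. For `l = 0`, a Hales–Jewett line
over the alphabet `Fin m → A`, unfolded into blocks of length `m`, is the required word.

For the step `l → l + 1`, an induction on `m` using the statement for `l` over the alphabet
`Option A`, whose letter `none` is read as the new first variable, gives `u` such that the colour
of `u · v` depends only on the letters of `v` before its first variable. A staircase of
Hales–Jewett lines makes that colour depend only on the position of the first variable, and the
pigeonhole principle picks `m` positions of equal colour over which the variables are spread.
-/
open Sum Combinatorics

section Words

variable {A B : Type}

theorem compWord_assoc {n m r s : ℕ} (u : Fin n → A ⊕ Fin m) (v : Fin m → A ⊕ Fin r)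
    (w : Fin r → A ⊕ Fin s) : compWord (compWord u v) w = compWord u (compWord v w) := by
  funext q
  simp only [compWord]
  cases u q <;> rfl

theorem compWord_cons {n m r : ℕ} (x : A ⊕ Fin m) (u : Fin n → A ⊕ Fin m)
    (v : Fin m → A ⊕ Fin r) :
    compWord (Fin.cons x u : Fin (n + 1) → A ⊕ Fin m) v =
      Fin.cons (Sum.elim inl v x) (compWord u v) := by
  funext q
  cases q using Fin.cases <;> rfl

theorem compWord_append {n n' m r : ℕ} (u : Fin n → A ⊕ Fin m) (u' : Fin n' → A ⊕ Fin m)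
    (v : Fin m → A ⊕ Fin r) :
    compWord (Fin.append u u') v = Fin.append (compWord u v) (compWord u' v) := by
  funext q
  cases q using Fin.addCases <;> simp [compWord]

theorem compWord_map_inr {n m m' r : ℕ} (g : Fin m → Fin m') (u : Fin n → A ⊕ Fin m)
    (v : Fin m' → A ⊕ Fin r) : compWord (Sum.map id g ∘ u) v = compWord u (v ∘ g) := by
  funext q
  simp only [compWord, Function.comp_apply]
  cases u q <;> rfl

theorem map_comp_compWord {n m r : ℕ} (f : A → B) (u : Fin n → A ⊕ Fin m)
    (v : Fin m → A ⊕ Fin r) :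
    Sum.map f id ∘ compWord u v = compWord (Sum.map f id ∘ u) (Sum.map f id ∘ v) := by
  funext q
  simp only [compWord, Function.comp_apply]
  cases u q <;> rfl

theorem isParamWord_of_fin_zero {n : ℕ} (w : Fin n → A ⊕ Fin 0) : IsParamWord w :=
  ⟨fun i => i.elim0, fun i => i.elim0⟩

theorem IsParamWord.comp {n m r : ℕ} {u : Fin n → A ⊕ Fin m} {v : Fin m → A ⊕ Fin r}
    (hu : IsParamWord u) (hv : IsParamWord v) : IsParamWord (compWord u v) := by
  refine ⟨fun i => ?_, fun i j hij q hq => ?_⟩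
  · obtain ⟨t, ht⟩ := hv.1 i
    obtain ⟨p, hp⟩ := hu.1 t
    exact ⟨p, by simp [compWord, hp, ht]⟩
  · cases hu' : u q with
    | inl a => simp [compWord, hu'] at hq
    | inr t =>
      obtain ⟨t', ht't, ht'⟩ := hv.2 i j hij t (by simpa [compWord, hu'] using hq)
      obtain ⟨p, hpq, hp⟩ := hu.2 t' t ht't q hu'
      exact ⟨p, hpq, by simp [compWord, hp, ht']⟩

theorem IsParamWord.map_letters {n m : ℕ} {w : Fin n → A ⊕ Fin m} (hw : IsParamWord w)
    (f : A → B) : IsParamWord (Sum.map f id ∘ w) := by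
  have hinr : ∀ x : A ⊕ Fin m, ∀ j, Sum.map f id x = inr j ↔ x = inr j := by
    rintro (a | i) j <;> simp
  simp only [IsParamWord, Function.comp_apply, hinr]
  exact hw

theorem IsParamWord.eq_zero_of_apply_zero {n m : ℕ} {v : Fin (n + 1) → A ⊕ Fin (m + 1)}
    (hv : IsParamWord v) {j : Fin (m + 1)} (h : v 0 = inr j) : j = 0 := by
  by_contra hj
  obtain ⟨p, hp, -⟩ := hv.2 0 j (Fin.pos_of_ne_zero hj) 0 h
  exact Fin.not_lt_zero p hp

theorem IsParamWord.tail {n m : ℕ} {v : Fin (n + 1) → A ⊕ Fin m} (hv : IsParamWord v)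
    (h : (v 0).isLeft) : IsParamWord (Fin.tail v) := by
  have hpos : ∀ {p j}, v p = inr j → ∃ p' : Fin n, p = p'.succ := fun {p j} hp =>
    Fin.eq_succ_of_ne_zero fun h0 => by simp [h0 ▸ hp] at h
  refine ⟨fun i => ?_, fun i j hij q hq => ?_⟩
  · obtain ⟨p, hp⟩ := hv.1 i
    obtain ⟨p, rfl⟩ := hpos hp
    exact ⟨p, hp⟩
  · obtain ⟨p, hpq, hp⟩ := hv.2 i j hij q.succ hq
    obtain ⟨p, rfl⟩ := hpos hp
    exact ⟨p, Fin.succ_lt_succ_iff.1 hpq, hp⟩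

end Words

section LeftPrefix

variable {α β γ : Type*}

def leftPrefix : List (α ⊕ β) → List α
  | [] => []
  | inl a :: L => a :: leftPrefix L
  | inr _ :: _ => []

@[simp] theorem leftPrefix_cons_inl (a : α) (L : List (α ⊕ β)) :
    leftPrefix (inl a :: L) = a :: leftPrefix L := rfl

@[simp] theorem leftPrefix_cons_inr (b : β) (L : List (α ⊕ β)) :
    leftPrefix (inr b :: L) = [] := rfl

theorem leftPrefix_map_inr (g : β → γ) (L : List (α ⊕ β)) :
    leftPrefix (L.map (Sum.map id g)) = leftPrefix L := by
  induction L with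
  | nil => rfl
  | cons x L ih => cases x <;> simp [ih]

theorem leftPrefix_append_of_isRight {L₁ : List (α ⊕ β)} (h : ∃ x ∈ L₁, x.isRight)
    (L₂ : List (α ⊕ β)) : leftPrefix (L₁ ++ L₂) = leftPrefix L₁ := by
  induction L₁ with
  | nil => simp at h
  | cons x L ih =>
    rcases x with a | b
    · simp only [List.cons_append, leftPrefix_cons_inl, List.cons.injEq, true_and]
      exact ih (by simpa using h)
    · rfl

theorem leftPrefix_map_inl_append (G : List α) (L : List (α ⊕ β)) :
    leftPrefix (G.map inl ++ L) = G ++ leftPrefix L := by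
  induction G with
  | nil => rfl
  | cons a G ih => simp [ih]

end LeftPrefix

section FirstVar

variable {A β : Type*}

def IsFirstVarPos {n : ℕ} (v : Fin n → A ⊕ β) (t : Fin n) : Prop :=
  (v t).isRight ∧ ∀ t' < t, (v t').isLeft

theorem exists_isFirstVarPos {n : ℕ} {v : Fin n → A ⊕ β} (h : ∃ p, (v p).isRight) :
    ∃ t, IsFirstVarPos v t := by
  obtain ⟨t, ht, hmin⟩ := wellFounded_lt.has_min {p | (v p).isRight} h
  exact ⟨t, ht, fun t' ht' => by simpa using fun h' => hmin t' h' ht'⟩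

theorem IsFirstVarPos.tail {n : ℕ} {v : Fin (n + 1) → A ⊕ β} {t : Fin n}
    (h : IsFirstVarPos v t.succ) : IsFirstVarPos (Fin.tail v) t :=
  ⟨h.1, fun t' ht' => h.2 t'.succ (Fin.succ_lt_succ_iff.2 ht')⟩

end FirstVar

section OptionLetters

variable {A : Type}

/-- A word over `Option A` with `l` variables is read as a word over `A` with `l + 1` variables,
the letter `none` becoming the new first variable. -/
def optionLetterEquiv (A : Type) (l : ℕ) : Option A ⊕ Fin l ≃ A ⊕ Fin (l + 1) where
  toFun := Sum.elim (fun o => o.elim (inr 0) inl) (inr ∘ Fin.succ)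
  invFun := Sum.elim (inl ∘ some) (Fin.cases (inl none) inr)
  left_inv := by rintro ((_ | a) | t) <;> rfl
  right_inv := by
    rintro (a | t)
    · rfl
    · cases t using Fin.cases <;> rfl

@[simp] theorem optionLetterEquiv_inl_none {l : ℕ} :
    optionLetterEquiv A l (inl none) = inr 0 := rfl

@[simp] theorem optionLetterEquiv_inl_some {l : ℕ} (a : A) :
    optionLetterEquiv A l (inl (some a)) = inl a := rfl

@[simp] theorem optionLetterEquiv_inr {l : ℕ} (t : Fin l) :
    optionLetterEquiv A l (inr t) = inr t.succ := rfl

theorem optionLetterEquiv_symm_eq_inr {l : ℕ} {x : A ⊕ Fin (l + 1)} {j : Fin l} :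
    (optionLetterEquiv A l).symm x = inr j ↔ x = inr j.succ :=
  Equiv.symm_apply_eq _

theorem isParamWord_cons_zero_iff {n m : ℕ} {u : Fin n → A ⊕ Fin (m + 1)} :
    IsParamWord (Fin.cons (inr 0) u : Fin (n + 1) → A ⊕ Fin (m + 1)) ↔
      IsParamWord ((optionLetterEquiv A m).symm ∘ u) := by
  simp only [IsParamWord, Function.comp_apply, optionLetterEquiv_symm_eq_inr]
  constructor
  · rintro ⟨hocc, hord⟩
    refine ⟨fun i => ?_, fun i j hij q hq => ?_⟩
    · obtain ⟨p, hp⟩ := hocc i.succ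
      cases p using Fin.cases with
      | zero => exact (Fin.succ_ne_zero i (Sum.inr.inj hp).symm).elim
      | succ p => exact ⟨p, hp⟩
    · obtain ⟨p, hpq, hp⟩ := hord i.succ j.succ (Fin.succ_lt_succ_iff.2 hij) q.succ hq
      cases p using Fin.cases with
      | zero => exact (Fin.succ_ne_zero i (Sum.inr.inj hp).symm).elim
      | succ p => exact ⟨p, Fin.succ_lt_succ_iff.1 hpq, hp⟩
  · rintro ⟨hocc, hord⟩
    refine ⟨fun i => ?_, fun i j hij q hq => ?_⟩
    · cases i using Fin.cases with
      | zero => exact ⟨0, rfl⟩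
      | succ i =>
        obtain ⟨p, hp⟩ := hocc i
        exact ⟨p.succ, hp⟩
    · cases q using Fin.cases with
      | zero => simp [← Sum.inr.inj hq] at hij
      | succ q =>
        cases j using Fin.cases with
        | zero => simp at hij
        | succ j =>
          cases i using Fin.cases with
          | zero => exact ⟨0, Fin.succ_pos q, rfl⟩
          | succ i =>
            obtain ⟨p, hpq, hp⟩ := hord i j (Fin.succ_lt_succ_iff.1 hij) q hq
            exact ⟨p.succ, Fin.succ_lt_succ_iff.2 hpq, hp⟩

theorem compWord_optionLetterEquiv_of_inl {n m r : ℕ} (ρ : Fin n → Option A ⊕ Fin m)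
    {v : Fin (m + 1) → A ⊕ Fin r} {a : A} (h : v 0 = inl a) :
    compWord (optionLetterEquiv A m ∘ ρ) v =
      compWord (Sum.map (·.getD a) id ∘ ρ) (Fin.tail v) := by
  funext q
  rcases hρ : ρ q with (_ | b) | t <;> simp [compWord, h, hρ, Fin.tail]

theorem compWord_optionLetterEquiv_of_inr {n m r : ℕ} (ρ : Fin n → Option A ⊕ Fin m)
    {v : Fin (m + 1) → A ⊕ Fin (r + 1)} (h : v 0 = inr 0) :
    compWord (optionLetterEquiv A m ∘ ρ) v =
      optionLetterEquiv A r ∘ compWord ρ ((optionLetterEquiv A r).symm ∘ Fin.tail v) := by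
  funext q
  rcases hρ : ρ q with (_ | b) | t <;> simp [compWord, h, hρ, Fin.tail]

end OptionLetters

theorem exists_orderEmbedding_forall_eq {ι κ : Type*} [Fintype ι] [LinearOrder ι] [Fintype κ]
    {m : ℕ} (c : ι → κ) (hm : Fintype.card κ * m < Fintype.card ι) :
    ∃ y : κ, ∃ g : Fin m ↪o ι, ∀ i, c (g i) = y := by
  classical
  obtain ⟨y, hy⟩ := Fintype.exists_lt_card_fiber_of_mul_lt_card c hm
  obtain ⟨T, hT, hTcard⟩ := Finset.exists_subset_card_eq hy.le
  exact ⟨y, T.orderEmbOfFin hTcard,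
    fun i => (Finset.mem_filter.1 (hT (T.orderEmbOfFin_mem hTcard i))).2⟩

section Spread

variable {A : Type} {m s : ℕ}

noncomputable def spreadWord (g : Fin m ↪o Fin s) (a : A) : Fin s → A ⊕ Fin m :=
  Function.extend g inr fun _ => inl a

theorem spreadWord_apply_self (g : Fin m ↪o Fin s) (a : A) (r : Fin m) :
    spreadWord g a (g r) = inr r :=
  g.injective.extend_apply _ _ r

theorem spreadWord_eq_inr_iff {g : Fin m ↪o Fin s} {a : A} {t : Fin s} {r : Fin m} :
    spreadWord g a t = inr r ↔ t = g r := by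
  refine ⟨fun h => ?_, fun h => h ▸ spreadWord_apply_self g a r⟩
  by_cases ht : ∃ r', g r' = t
  · obtain ⟨r', rfl⟩ := ht
    rw [spreadWord_apply_self, Sum.inr.injEq] at h
    rw [h]
  · simp [spreadWord, Function.extend_apply' _ _ _ ht] at h

theorem isParamWord_spreadWord (g : Fin m ↪o Fin s) (a : A) : IsParamWord (spreadWord g a) :=
  ⟨fun r => ⟨g r, spreadWord_apply_self g a r⟩, fun i _ hij _ hq =>
    ⟨g i, spreadWord_eq_inr_iff.1 hq ▸ g.lt_iff_lt.2 hij, spreadWord_apply_self g a i⟩⟩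

theorem IsFirstVarPos.compWord_spreadWord {r : ℕ} {v : Fin m → A ⊕ Fin r} {p : Fin m}
    (hp : IsFirstVarPos v p) (g : Fin m ↪o Fin s) (a : A) :
    IsFirstVarPos (compWord (spreadWord g a) v) (g p) := by
  refine ⟨by simpa [compWord, spreadWord_apply_self] using hp.1, fun t ht => ?_⟩
  simp only [compWord]
  rcases h : spreadWord g a t with b | i
  · rfl
  · rw [spreadWord_eq_inr_iff.1 h, g.lt_iff_lt] at ht
    exact hp.2 i ht

end Spread

section HalesJewett

variable {A ι : Type} {m : ℕ}

theorem compWord_subspace_inl {n r : ℕ} (S : Subspace (Fin m) A ι) (e : Fin n → ι)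
    (x : Fin m → A) :
    compWord (S.idxFun ∘ e) (inl ∘ x : Fin m → A ⊕ Fin r) = inl ∘ S x ∘ e := by
  funext q
  simp only [compWord, Function.comp_apply, Subspace.coe_apply]
  cases S.idxFun (e q) <;> rfl

noncomputable def gridEquiv (ι : Type) [Fintype ι] (m : ℕ) :
    ι × Fin m ≃ Fin (Fintype.card ι * m) :=
  (Equiv.prodCongr (Fintype.equivFin ι) (Equiv.refl _)).trans finProdFinEquiv

theorem isParamWord_toSubspace [Fintype ι] (l : Line (Fin m → A) ι) :
    IsParamWord (l.toSubspace.idxFun ∘ (gridEquiv ι m).symm) := by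
  refine ⟨fun j => ?_, fun i j hij q hq => ?_⟩
  · obtain ⟨p, hp⟩ := l.toSubspace.proper j
    exact ⟨gridEquiv ι m p, by simpa using hp⟩
  · obtain ⟨⟨b, e⟩, rfl⟩ := (gridEquiv ι m).surjective q
    simp only [Function.comp_apply, Equiv.symm_apply_apply, Line.toSubspace] at hq ⊢
    cases hb : l.idxFun b with
    | some f => simp [hb] at hq
    | none =>
      obtain rfl : e = j := by simpa [hb] using hq
      refine ⟨gridEquiv ι m (b, i), ?_, by simp [hb]⟩
      simp [gridEquiv, Fin.lt_def, hij]

end HalesJewett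

def GrahamRothschildProperty (l : ℕ) : Prop :=
  ∀ (A : Type) [Finite A] (m : ℕ) (κ : Type) [Finite κ],
    ∃ n : ℕ, ∀ χ : (Fin n → A ⊕ Fin l) → κ,
      ∃ u : Fin n → A ⊕ Fin m, IsParamWord u ∧ ∃ j : κ,
        ∀ v : Fin m → A ⊕ Fin l, IsParamWord v → χ (compWord u v) = j

theorem grahamRothschildProperty_zero : GrahamRothschildProperty 0 := by
  intro A _ m κ _
  obtain ⟨ι, _, hι⟩ := Line.exists_mono_in_high_dimension (Fin m → A) κ
  refine ⟨Fintype.card ι * m, fun χ => ?_⟩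
  obtain ⟨l, hl⟩ := hι fun x => χ (inl ∘ (fun (b, e) => x b e) ∘ (gridEquiv ι m).symm)
  obtain ⟨c, hc⟩ :=
    Line.IsMono.toSubspace (C := fun y => χ (inl ∘ y ∘ (gridEquiv ι m).symm)) hl
  refine ⟨_, isParamWord_toSubspace l, c, fun v _ => ?_⟩
  obtain ⟨x, rfl⟩ : ∃ x : Fin m → A, v = inl ∘ x :=
    ⟨fun t => (v t).elim id Fin.elim0, funext fun t => by
      rcases h : v t with a | i
      exacts [by simp [h], i.elim0]⟩
  rw [compWord_subspace_inl]
  exact hc x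

section Staircase

variable {A : Type}

theorem isParamWord_append_shift {L M s : ℕ} {u : Fin L → A ⊕ Fin 1}
    {w : Fin M → A ⊕ Fin s} (hu : ∃ p, u p = inr 0) (hw : IsParamWord w) :
    IsParamWord (Fin.append (Sum.map id (fun _ => 0) ∘ u) (Sum.map id Fin.succ ∘ w)) := by
  obtain ⟨p₀, hp₀⟩ := hu
  have hzero : Fin.append (Sum.map id (fun _ => 0) ∘ u) (Sum.map id Fin.succ ∘ w)
      (Fin.castAdd M p₀) = inr (0 : Fin (s + 1)) := by simp [hp₀]
  refine ⟨fun i => ?_, fun i j hij q hq => ?_⟩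
  · cases i using Fin.cases with
    | zero => exact ⟨_, hzero⟩
    | succ i =>
      obtain ⟨p, hp⟩ := hw.1 i
      exact ⟨Fin.natAdd L p, by simp [hp]⟩
  · cases q using Fin.addCases with
    | left q =>
      obtain rfl : j = 0 := by
        rcases h : u q with a | z <;> simp [h] at hq
        exact hq.symm
      exact absurd hij (Fin.not_lt_zero i)
    | right q =>
      obtain ⟨j', hwq, rfl⟩ : ∃ j', w q = inr j' ∧ j = j'.succ := by
        rcases h : w q with a | j' <;> simp [h] at hq
        exact ⟨j', rfl, hq.symm⟩
      cases i using Fin.cases with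
      | zero => exact ⟨_, show (p₀ : ℕ) < L + q by omega, hzero⟩
      | succ i =>
        obtain ⟨p, hpq, hp⟩ := hw.2 i j' (Fin.succ_lt_succ_iff.1 hij) q hwq
        exact ⟨Fin.natAdd L p, Nat.add_lt_add_left hpq L, by simp [hp]⟩

theorem exists_leftPrefix_eq_of_isFirstVarPos (A : Type) [Finite A] (r s : ℕ) (κ : Type)
    [Finite κ] :
    ∃ M : ℕ, ∀ f : List A → κ, ∃ w : Fin M → A ⊕ Fin s, IsParamWord w ∧ ∃ c : Fin s → κ,
      ∀ (v : Fin s → A ⊕ Fin r) (t : Fin s), IsFirstVarPos v t →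
        f (leftPrefix (List.ofFn (compWord w v))) = c t := by
  induction s generalizing κ with
  | zero =>
    exact ⟨0, fun f => ⟨Fin.elim0, isParamWord_of_fin_zero _, Fin.elim0, fun _ t => t.elim0⟩⟩
  | succ s ih =>
    obtain ⟨L, hL⟩ := Subspace.exists_mono_in_high_dimension_fin A (Fin s → κ) (Fin 1)
    obtain ⟨M, hM⟩ := ih ((Fin L → A) → κ)
    refine ⟨L + M, fun f => ?_⟩
    obtain ⟨w, hw, c, hc⟩ := hM fun P z => f (List.ofFn z ++ P)
    obtain ⟨S, cS, hcS⟩ := hL fun z t => c t z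
    refine ⟨_, isParamWord_append_shift (S.proper 0) hw,
      Fin.cons (f (leftPrefix (List.ofFn S.idxFun))) cS, fun v t ht => ?_⟩
    rw [compWord_append, compWord_map_inr, compWord_map_inr, List.ofFn_fin_append]
    cases t using Fin.cases with
    | zero =>
      obtain ⟨b, hb⟩ := Sum.isRight_iff.1 ht.1
      have hS : compWord S.idxFun (v ∘ fun _ => 0) = Sum.map id (fun _ => b) ∘ S.idxFun := by
        funext q
        simp only [compWord, Function.comp_apply]
        cases S.idxFun q <;> simp [hb]
      obtain ⟨p, hp⟩ := S.proper 0
      rw [hS, leftPrefix_append_of_isRight ⟨_, List.mem_ofFn.2 ⟨p, rfl⟩, by simp [hp]⟩,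
        ← List.map_ofFn, leftPrefix_map_inr, Fin.cons_zero]
    | succ t =>
      obtain ⟨a, ha⟩ := Sum.isLeft_iff.1 (ht.2 0 (Fin.succ_pos t))
      have hS : compWord S.idxFun (v ∘ fun _ => 0) = inl ∘ S fun _ => a := by
        rw [show v ∘ (fun _ => 0) = inl ∘ fun _ => a from funext fun _ => ha]
        exact compWord_subspace_inl S id _
      rw [hS, ← List.map_ofFn, leftPrefix_map_inl_append, Fin.cons_succ, ← hcS fun _ => a]
      exact congrFun (hc (Fin.tail v) t ht.tail) _

end Staircase

theorem GrahamRothschildProperty.exists_leftPrefix_coloring {l : ℕ}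
    (h : GrahamRothschildProperty l) (A : Type) [Finite A] (m : ℕ) (κ : Type) [Finite κ] :
    ∃ n : ℕ, ∀ χ : (Fin n → A ⊕ Fin (l + 1)) → κ,
      ∃ u : Fin n → A ⊕ Fin m, IsParamWord u ∧ ∃ f : List A → κ,
        ∀ v : Fin m → A ⊕ Fin (l + 1), IsParamWord v →
          χ (compWord u v) = f (leftPrefix (List.ofFn v)) := by
  induction m generalizing κ with
  | zero =>
    exact ⟨0, fun χ => ⟨Fin.elim0, isParamWord_of_fin_zero _, fun _ => χ Fin.elim0,
      fun v hv => (hv.1 0).elim fun p _ => p.elim0⟩⟩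
  | succ m ih =>
    let e := optionLetterEquiv A
    obtain ⟨R, hR⟩ := ih (A → κ)
    obtain ⟨n, hn⟩ := h (Option A) R κ
    refine ⟨n + 1, fun χ => ?_⟩
    obtain ⟨C₁, hC₁, c₀, hc₀⟩ := hn fun ρ => χ (Fin.cons (inr 0) (e l ∘ ρ))
    obtain ⟨C₂, hC₂, g, hg⟩ := hR fun τ a =>
      χ (Fin.cons (inl a) (compWord (Sum.map (·.getD a) id ∘ C₁) τ))
    let C := compWord C₁ (Sum.map some id ∘ C₂)
    have hC : IsParamWord (Fin.cons (inr 0) (e m ∘ C) : Fin (n + 1) → A ⊕ Fin (m + 1)) := by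
      rw [isParamWord_cons_zero_iff, ← Function.comp_assoc, Equiv.symm_comp_self]
      exact hC₁.comp (hC₂.map_letters some)
    refine ⟨_, hC, fun | [] => c₀ | a :: L => g L a, fun v hv => ?_⟩
    rw [compWord_cons, Sum.elim_inr, List.ofFn_succ]
    rcases hv0 : v 0 with a | j
    · have hsome : Sum.map (·.getD a) id ∘ Sum.map some id ∘ C₂ = C₂ := by
        funext q
        simp only [Function.comp_apply]
        cases C₂ q <;> rfl
      rw [leftPrefix_cons_inl, compWord_optionLetterEquiv_of_inl _ hv0, map_comp_compWord, hsome,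
        compWord_assoc]
      exact congrFun (hg _ (hv.tail (by simp [hv0]))) a
    · obtain rfl := hv.eq_zero_of_apply_zero hv0
      have hσ : IsParamWord ((e l).symm ∘ Fin.tail v) := by
        rw [← isParamWord_cons_zero_iff, ← hv0, Fin.cons_self_tail]
        exact hv
      rw [leftPrefix_cons_inr, compWord_optionLetterEquiv_of_inr _ hv0, compWord_assoc]
      exact hc₀ _ ((hC₂.map_letters some).comp hσ)

theorem GrahamRothschildProperty.succ {l : ℕ} (h : GrahamRothschildProperty l) :
    GrahamRothschildProperty (l + 1) := by
  intro A _ m κ _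
  rcases isEmpty_or_nonempty A with hA | hA
  · obtain ⟨n, hn⟩ := h.exists_leftPrefix_coloring A m κ
    refine ⟨n, fun χ => ?_⟩
    obtain ⟨u, hu, f, hf⟩ := hn χ
    exact ⟨u, hu, f [], fun v hv => by rw [hf v hv, Unique.eq_default (leftPrefix _)]; rfl⟩
  obtain ⟨a⟩ := hA
  have := Fintype.ofFinite κ
  obtain ⟨M, hM⟩ := exists_leftPrefix_eq_of_isFirstVarPos A (l + 1)
    (Fintype.card κ * m + 1) κ
  obtain ⟨n, hn⟩ := h.exists_leftPrefix_coloring A M κ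
  refine ⟨n, fun χ => ?_⟩
  obtain ⟨u, hu, f, hf⟩ := hn χ
  obtain ⟨w, hw, c, hc⟩ := hM f
  obtain ⟨j, g, hg⟩ := exists_orderEmbedding_forall_eq (m := m) c (by simp)
  refine ⟨compWord u (compWord w (spreadWord g a)),
    hu.comp (hw.comp (isParamWord_spreadWord g a)), j, fun v hv => ?_⟩
  obtain ⟨p, hp⟩ := exists_isFirstVarPos (v := v) ((hv.1 0).imp fun p hp => by simp [hp])
  rw [compWord_assoc, hf _ ((hw.comp (isParamWord_spreadWord g a)).comp hv), compWord_assoc,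
    hc _ _ (hp.compWord_spreadWord g a), hg]

theorem grahamRothschildProperty (l : ℕ) : GrahamRothschildProperty l := by
  induction l with
  | zero => exact grahamRothschildProperty_zero
  | succ l ih => exact ih.succ

theorem grahamRothschild_general (A : Type) [Finite A] (m l k : ℕ)
    (hm : 1 ≤ m) (hk : 2 ≤ k) :
    ∃ n : ℕ, 1 ≤ n ∧ ∀ χ : (Fin n → A ⊕ Fin l) → Fin k,
      ∃ u : Fin n → A ⊕ Fin m, IsParamWord u ∧ ∃ j : Fin k,
        ∀ v : Fin m → A ⊕ Fin l, IsParamWord v → χ (compWord u v) = j := by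
  obtain ⟨n, hn⟩ := grahamRothschildProperty l A m (Fin k)
  refine ⟨n, ?_, hn⟩
  obtain ⟨u, hu, -⟩ := hn fun _ => ⟨0, by omega⟩
  obtain ⟨p, -⟩ := hu.1 ⟨0, hm⟩
  exact p.pos

/-- The Graham–Rothschild theorem: for a finite alphabet `A`, `m, ℓ ≥ 1` and `k ≥ 2` there is a
positive integer `n` such that for every `k`-coloring of the `ℓ`-parameter words of length `n`
over `A` there are an `m`-parameter word `u` of length `n` and a color `j` such that
`u · v` has color `j` for every `ℓ`-parameter word `v` of length `m`. -/
theorem grahamRothschild (A : Type) [Finite A] (m l k : ℕ)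
    (hm : 1 ≤ m) (hl : 1 ≤ l) (hk : 2 ≤ k) :
    ∃ n : ℕ, 1 ≤ n ∧ ∀ χ : (Fin n → A ⊕ Fin l) → Fin k,
      ∃ u : Fin n → A ⊕ Fin m, IsParamWord u ∧ ∃ j : Fin k,
        ∀ v : Fin m → A ⊕ Fin l, IsParamWord v → χ (compWord u v) = j :=
  grahamRothschild_general A m l k hm hk
end

section
/- The class of all finite linearly ordered graphs has the Ramsey property: for every integer k ≥ 2 and all finite linearly ordered graphs G and H such that G embeds into H, there exists a finite linearly ordered graph K such that for every k-coloring of the set of embeddings of G into K there exist an embedding w : H ↪ K and a color i such that w ∘ g has color i for every embedding g : G ↪ H. -/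
/-!
Nešetřil–Rödl partite construction. A picture is an ordered graph whose vertices are split into
parts, each an interval of the order. Partite lemma: given a picture `P` and a position `e` of a
pattern `G` transversal to the parts, Hales–Jewett over the alphabet of copies of `G` at `e`
yields an amalgam of copies of `P`, one per combinatorial line, such that any colouring of the
copies of `G` at `e` is constant on those inside one of these copies of `P`. Start from disjoint
copies of `H`, one on each `|H|`-subset of `Fin N`, and apply the partite lemma once for every
position: inside the final embedded copy of the start picture, the colour of a copy of `G` depends
only on its position, a `|G|`-subset of `Fin N`. Ramsey's theorem for `|G|`-subsets then gives an
`|H|`-subset all of whose `|G|`-subsets have one colour, and the copy of `H` on it is the required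
one.
-/

/-- A finite linearly ordered graph: a finite vertex set with a symmetric irreflexive
adjacency relation and a (strict) linear order on the vertices. -/
structure OrdGraph where
  V : Type
  finite : Finite V
  adj : V → V → Prop
  adj_symm : ∀ x y, adj x y → adj y x
  adj_irrefl : ∀ x, ¬ adj x x
  lt : V → V → Prop
  lt_irrefl : ∀ x, ¬ lt x x
  lt_trans : ∀ x y z, lt x y → lt y z → lt x z
  lt_total : ∀ x y, lt x y ∨ x = y ∨ lt y x

/-- An embedding of linearly ordered graphs: an injective map which preserves and reflects
adjacency and preserves the linear order. -/
def OrdGraph.Emb (G H : OrdGraph) (f : G.V → H.V) : Prop :=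
  Function.Injective f ∧
  (∀ x y, G.adj x y ↔ H.adj (f x) (f y)) ∧
  (∀ x y, G.lt x y → H.lt (f x) (f y))

open Finset Function Combinatorics

section FinsetRamsey

def IsRamseyBound (κ : Type*) (a n N : ℕ) : Prop :=
  ∀ ⦃α : Type⦄ [LinearOrder α] (C : Finset α → κ) (V : Finset α), N ≤ #V →
    ∃ T ⊆ V, #T = n ∧ ∃ i, ∀ s ⊆ T, #s = a → C s = i

variable {κ : Type*} {α : Type*} [LinearOrder α]

-- The colour of an `(a + 1)`-subset of `xs ∪ A` depends only on its least element, taken in `xs`.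
def IsPrehomogeneous (C : Finset α → κ) (a : ℕ) (xs A : Finset α) (c : α → κ) : Prop :=
  (∀ x ∈ xs, ∀ y ∈ A, x < y) ∧
    ∀ x ∈ xs, ∀ s ⊆ {y ∈ xs | x < y} ∪ A, #s = a → C (insert x s) = c x

lemma IsPrehomogeneous.insert_min' {C : Finset α → κ} {a : ℕ} {xs A T : Finset α} {c : α → κ}
    (h : IsPrehomogeneous C a xs A c) (hA : A.Nonempty) (hT : T ⊆ A.erase (A.min' hA)) {i : κ}
    (hi : ∀ s ⊆ T, #s = a → C (insert (A.min' hA) s) = i) :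
    IsPrehomogeneous C a (insert (A.min' hA) xs) T (update c (A.min' hA) i) := by
  set m := A.min' hA
  have hTA : T ⊆ A := hT.trans (erase_subset _ _)
  have hm_lt : ∀ y ∈ T, m < y := fun y hy => by
    obtain ⟨hym, hyA⟩ := mem_erase.mp (hT hy)
    exact (A.min'_le y hyA).lt_of_ne' hym
  have hlt_m : ∀ x ∈ xs, x < m := fun x hx => h.1 x hx m (A.min'_mem hA)
  refine ⟨fun x hx y hy => ?_, fun x hx s hs hsa => ?_⟩
  · rcases mem_insert.mp hx with rfl | hx
    exacts [hm_lt y hy, h.1 x hx y (hTA hy)]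
  rcases mem_insert.mp hx with rfl | hx
  · rw [update_self]
    refine hi s (fun z hz => ?_) hsa
    rcases mem_union.mp (hs hz) with hz | hz
    · obtain ⟨hz, hxz⟩ := mem_filter.mp hz
      rcases mem_insert.mp hz with rfl | hz
      exacts [absurd hxz (lt_irrefl _), absurd hxz (hlt_m z hz).not_gt]
    · exact hz
  · rw [update_of_ne (hlt_m x hx).ne]
    refine h.2 x hx s (fun z hz => ?_) hsa
    rcases mem_union.mp (hs hz) with hz | hz
    · obtain ⟨hz, hxz⟩ := mem_filter.mp hz
      rcases mem_insert.mp hz with rfl | hz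
      exacts [mem_union_right _ (A.min'_mem hA), mem_union_left _ (mem_filter.mpr ⟨hz, hxz⟩)]
    · exact mem_union_right _ (hTA hz)

-- Erdős–Rado: choose the next element as the least one of `A` and shrink the rest of `A`
-- to a set on which the colouring `s ↦ C (insert x s)` is constant.
lemma exists_prehomogeneous {a : ℕ} (ih : ∀ r, ∃ N, IsRamseyBound κ a r N) (m r : ℕ) :
    ∃ N, ∀ ⦃α : Type⦄ [LinearOrder α] (C : Finset α → κ) (V : Finset α), N ≤ #V →
      ∃ xs ⊆ V, ∃ A ⊆ V, ∃ c, #xs = m ∧ #A = r ∧ IsPrehomogeneous C a xs A c := by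
  induction m generalizing r with
  | zero =>
    refine ⟨r, fun α _ C V hV => ?_⟩
    obtain ⟨A, hAV, hA⟩ := exists_subset_card_eq hV
    exact ⟨∅, empty_subset _, A, hAV, fun _ => C ∅, rfl, hA, by simp [IsPrehomogeneous]⟩
  | succ m ihm =>
    obtain ⟨M, hM⟩ := ih r
    obtain ⟨N, hN⟩ := ihm (M + 1)
    refine ⟨N, fun α _ C V hV => ?_⟩
    obtain ⟨xs, hxsV, A, hAV, c, hxs, hA, h⟩ := hN C V hV
    have hAne : A.Nonempty := card_pos.mp (by omega)
    have hmA := A.min'_mem hAne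
    obtain ⟨T, hT, hTr, i, hi⟩ := hM (fun s => C (insert (A.min' hAne) s)) (A.erase (A.min' hAne))
      (by rw [card_erase_of_mem hmA]; omega)
    refine ⟨_, insert_subset (hAV hmA) hxsV, T, (hT.trans (erase_subset _ _)).trans hAV, _, ?_, hTr,
      h.insert_min' hAne hT hi⟩
    rw [card_insert_of_notMem fun hm => (h.1 _ hm _ hmA).false, hxs]

lemma IsPrehomogeneous.exists_monochromatic [Fintype κ] {C : Finset α → κ} {a n : ℕ}
    {xs A : Finset α} {c : α → κ} (h : IsPrehomogeneous C a xs A c)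
    (hxs : Fintype.card κ * n < #xs) :
    ∃ T ⊆ xs, #T = n ∧ ∃ i, ∀ s ⊆ T, #s = a + 1 → C s = i := by
  classical
  obtain ⟨i, -, hi⟩ := exists_lt_card_fiber_of_mul_lt_card_of_maps_to
    (fun x _ => mem_univ (c x)) (by rwa [card_univ])
  obtain ⟨T, hT, hTn⟩ := exists_subset_card_eq hi.le
  have hTxs : T ⊆ xs := hT.trans (filter_subset _ _)
  refine ⟨T, hTxs, hTn, i, fun s hs hsa => ?_⟩
  have hne : s.Nonempty := card_pos.mp (by omega)
  have hm := s.min'_mem hne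
  rw [← insert_erase hm, h.2 _ (hTxs (hs hm)) (s.erase _) (fun z hz => ?_)
    (by rw [card_erase_of_mem hm]; omega)]
  · exact (mem_filter.mp (hT (hs hm))).2
  · obtain ⟨hzm, hzs⟩ := mem_erase.mp hz
    exact mem_union_left _ (mem_filter.mpr ⟨hTxs (hs hzs), (s.min'_le z hzs).lt_of_ne' hzm⟩)

theorem exists_isRamseyBound [Fintype κ] (a n : ℕ) : ∃ N, IsRamseyBound κ a n N := by
  induction a generalizing n with
  | zero =>
    refine ⟨n, fun α _ C V hV => ?_⟩
    obtain ⟨T, hTV, hT⟩ := exists_subset_card_eq hV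
    exact ⟨T, hTV, hT, C ∅, fun s _ hs => by rw [card_eq_zero.mp hs]⟩
  | succ a ih =>
    obtain ⟨N, hN⟩ := exists_prehomogeneous ih (Fintype.card κ * n + 1) 0
    refine ⟨N, fun α _ C V hV => ?_⟩
    obtain ⟨xs, hxsV, A, -, c, hxs, -, h⟩ := hN C V hV
    obtain ⟨T, hT, hTn, hmono⟩ := h.exists_monochromatic (n := n) (by omega)
    exact ⟨T, hT.trans hxsV, hTn, hmono⟩

end FinsetRamsey

lemma orderEmbOfFin_image_comp_symm {α β : Type*} [LinearOrder α] [LinearOrder β] [Fintype β]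
    {f : β → α} (hf : StrictMono f) (h : #(univ.image f) = Fintype.card β) :
    (univ.image f).orderEmbOfFin h ∘ (monoEquivOfFin β rfl).symm = f := by
  rw [← orderEmbOfFin_unique h (fun x => mem_image_of_mem f (mem_univ _))
    (hf.comp (monoEquivOfFin β rfl).strictMono)]
  ext x
  simp

theorem exists_strictMono_ramsey (β γ κ : Type*) [LinearOrder β] [Fintype β] [LinearOrder γ]
    [Fintype γ] [Fintype κ] [Nonempty κ] :
    ∃ N, ∀ c : (β → Fin N) → κ, ∃ φ : γ → Fin N, StrictMono φ ∧
      ∃ i, ∀ g : β → γ, StrictMono g → c (φ ∘ g) = i := by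
  classical
  obtain ⟨N, hN⟩ := exists_isRamseyBound (κ := κ) (Fintype.card β) (Fintype.card γ)
  refine ⟨N, fun c => ?_⟩
  obtain ⟨T, -, hT, i, hi⟩ := hN (fun s => if h : #s = Fintype.card β then
    c (s.orderEmbOfFin h ∘ (monoEquivOfFin β rfl).symm) else Classical.arbitrary κ) univ (by simp)
  set φ := T.orderEmbOfFin hT ∘ (monoEquivOfFin γ rfl).symm
  have hφ : StrictMono φ :=
    (T.orderEmbOfFin hT).strictMono.comp (monoEquivOfFin γ rfl).symm.strictMono
  refine ⟨φ, hφ, i, fun g hg => ?_⟩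
  have hφg : StrictMono (φ ∘ g) := hφ.comp hg
  have hcard : #(univ.image (φ ∘ g)) = Fintype.card β := by
    rw [card_image_of_injective _ hφg.injective, card_univ]
  have hsub : univ.image (φ ∘ g) ⊆ T := by
    simp only [image_subset_iff, mem_univ, forall_const]
    exact fun x => orderEmbOfFin_mem T hT _
  simpa [hcard, orderEmbOfFin_image_comp_symm hφg] using hi _ hsub hcard

instance Combinatorics.Line.finite {α ι : Type*} [Finite α] [Finite ι] : Finite (Line α ι) :=
  Finite.of_injective Line.idxFun fun _ _ => Line.ext

lemma Combinatorics.Line.strictMono {α ι : Type*} [Preorder α] (l : Line α ι) : StrictMono l := by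
  intro x y hxy
  refine Pi.lt_def.mpr ⟨fun i => ?_, l.proper.choose, ?_⟩
  · cases h : l.idxFun i <;> simp [h, hxy.le]
  · simp [l.proper.choose_spec, hxy]

namespace OrdGraph

def graph (G : OrdGraph) : SimpleGraph G.V where
  Adj := G.adj
  symm := ⟨G.adj_symm⟩
  loopless := ⟨G.adj_irrefl⟩

noncomputable abbrev linearOrder (G : OrdGraph) : LinearOrder G.V :=
  have : IsStrictTotalOrder G.V G.lt :=
    { trichotomous x y hxy hyx := ((G.lt_total x y).resolve_left hxy).resolve_right hyx
      irrefl := G.lt_irrefl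
      trans := G.lt_trans }
  by classical exact linearOrderOfSTO G.lt

end OrdGraph

-- A picture of the partite construction: an ordered graph split into parts indexed by `Λ`,
-- each part an interval of the vertex order.
structure Picture (Λ : Type*) [LinearOrder Λ] where
  V : Type
  [finite : Finite V]
  graph : SimpleGraph V
  [order : LinearOrder V]
  part : V → Λ
  monotone_part : Monotone part

attribute [instance] Picture.finite Picture.order

namespace Picture

variable {Λ : Type*} [LinearOrder Λ]

structure IsEmbedding (P Q : Picture Λ) (F : P.V → Q.V) : Prop where
  part_apply (x : P.V) : Q.part (F x) = P.part x
  adj_iff (x y : P.V) : Q.graph.Adj (F x) (F y) ↔ P.graph.Adj x y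
  strictMono : StrictMono F

lemma isEmbedding_id (P : Picture Λ) : IsEmbedding P P id :=
  ⟨fun _ => rfl, fun _ _ => Iff.rfl, strictMono_id⟩

lemma IsEmbedding.comp {P Q S : Picture Λ} {F : P.V → Q.V} {G : Q.V → S.V}
    (hG : IsEmbedding Q S G) (hF : IsEmbedding P Q F) : IsEmbedding P S (G ∘ F) :=
  ⟨fun x => (hG.part_apply _).trans (hF.part_apply x),
    fun x y => (hG.adj_iff _ _).trans (hF.adj_iff x y), hG.strictMono.comp hF.strictMono⟩

variable {β : Type}

structure IsCopy (P : Picture Λ) (R : β → β → Prop) (e : β → Λ) (f : β → P.V) : Prop where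
  part_apply (j : β) : P.part (f j) = e j
  adj_iff (i j : β) : P.graph.Adj (f i) (f j) ↔ R i j

lemma IsEmbedding.isCopy_comp {P Q : Picture Λ} {F : P.V → Q.V} (hF : IsEmbedding P Q F)
    {R : β → β → Prop} {e : β → Λ} {f : β → P.V} (hf : P.IsCopy R e f) : Q.IsCopy R e (F ∘ f) :=
  ⟨fun j => (hF.part_apply _).trans (hf.part_apply j),
    fun i j => (hF.adj_iff _ _).trans (hf.adj_iff i j)⟩

lemma IsCopy.strictMono {P : Picture Λ} {R : β → β → Prop} {e : β → Λ} {f : β → P.V}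
    [Preorder β] (hf : P.IsCopy R e f) (he : StrictMono e) : StrictMono f := fun i j hij =>
  P.monotone_part.reflect_lt (by rw [hf.part_apply, hf.part_apply]; exact he hij)

def Copy (P : Picture Λ) (R : β → β → Prop) (e : β → Λ) : Type :=
  {f : β → P.V // P.IsCopy R e f}

instance [Finite β] (P : Picture Λ) (R : β → β → Prop) (e : β → Λ) : Finite (P.Copy R e) :=
  Subtype.finite

section Amalgam

variable (P : Picture Λ) (R : β → β → Prop) (e : β → Λ) (ι : Type)

-- The parts `e j` are replaced by the words `ι → P.V` (tagged with `j`; words leaving part `e j`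
-- stay isolated); every other part is copied once for each combinatorial line of copies.
def AmalgamV : Type := (β × (ι → P.V)) ⊕ (Line (P.Copy R e) ι × P.V)

variable {P R e ι}

noncomputable def lineEmb (l : Line (P.Copy R e) ι) (x : P.V) : AmalgamV P R e ι :=
  (partialInv e (P.part x)).elim (.inr (l, x)) fun j => .inl (j, l.map (fun c => c.1 j) x)

def amalgamPart : AmalgamV P R e ι → Λ :=
  Sum.elim (fun w => e w.1) (fun q => P.part q.2)

def amalgamAdj (u v : AmalgamV P R e ι) : Prop :=
  ∃ (l : Line (P.Copy R e) ι) (x y : P.V),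
    P.graph.Adj x y ∧ lineEmb l x = u ∧ lineEmb l y = v

def copyTuple (p : ι → P.Copy R e) (j : β) : AmalgamV P R e ι :=
  .inl (j, fun s => (p s).1 j)

lemma lineEmb_of_partialInv_eq_some {l : Line (P.Copy R e) ι} {x : P.V} {j : β}
    (h : partialInv e (P.part x) = some j) : lineEmb l x = .inl (j, l.map (fun c => c.1 j) x) := by
  rw [lineEmb, h]; rfl

lemma lineEmb_of_partialInv_eq_none {l : Line (P.Copy R e) ι} {x : P.V}
    (h : partialInv e (P.part x) = none) : lineEmb l x = .inr (l, x) := by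
  rw [lineEmb, h]; rfl

lemma amalgamPart_lineEmb (he : Injective e) (l : Line (P.Copy R e) ι) (x : P.V) :
    amalgamPart (lineEmb l x) = P.part x := by
  cases h : partialInv e (P.part x) with
  | none => rw [lineEmb_of_partialInv_eq_none h]; rfl
  | some j => rw [lineEmb_of_partialInv_eq_some h]; exact (he.isPartialInv j _).mp h

lemma eq_of_lineEmb_eq_of_partialInv_eq_none (he : Injective e) {l l' : Line (P.Copy R e) ι}
    {x x' : P.V} (hx : partialInv e (P.part x) = none) (h : lineEmb l' x' = lineEmb l x) :
    l' = l ∧ x' = x := by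
  have hx' : partialInv e (P.part x') = none := by
    rw [← amalgamPart_lineEmb he l' x', h, amalgamPart_lineEmb he, hx]
  rw [lineEmb_of_partialInv_eq_none hx, lineEmb_of_partialInv_eq_none hx'] at h
  exact Prod.ext_iff.mp (Sum.inr_injective h)

lemma line_apply_eq_of_lineEmb_eq_of_partialInv_eq_some (he : Injective e)
    {l l' : Line (P.Copy R e) ι} {x x' : P.V} {j : β} (hx : partialInv e (P.part x) = some j)
    (h : lineEmb l' x' = lineEmb l x) :
    l'.map (fun c => c.1 j) x' = l.map (fun c => c.1 j) x := by
  have hx' : partialInv e (P.part x') = some j := by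
    rw [← amalgamPart_lineEmb he l' x', h, amalgamPart_lineEmb he, hx]
  rw [lineEmb_of_partialInv_eq_some hx, lineEmb_of_partialInv_eq_some hx'] at h
  exact (Prod.ext_iff.mp (Sum.inl_injective h)).2

lemma lineEmb_injective (he : Injective e) (l : Line (P.Copy R e) ι) : Injective (lineEmb l) := by
  intro x' x h
  cases hx : partialInv e (P.part x) with
  | none => exact (eq_of_lineEmb_eq_of_partialInv_eq_none he hx h).2
  | some j =>
    obtain ⟨s, hs⟩ := l.proper
    simpa [Line.map, hs] using
      congrFun (line_apply_eq_of_lineEmb_eq_of_partialInv_eq_some he hx h) s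

-- Two lines of copies either share a moving coordinate, where they agree with `x` and `x'`,
-- or each is constant on a moving coordinate of the other, where they read off two copies.
lemma adj_of_line_apply_eq {l l' : Line (P.Copy R e) ι} {i j : β} {x y x' y' : P.V}
    (hx : l.map (fun c => c.1 i) x = l'.map (fun c => c.1 i) x')
    (hy : l.map (fun c => c.1 j) y = l'.map (fun c => c.1 j) y') (h : P.graph.Adj x' y') :
    P.graph.Adj x y := by
  by_cases hs : ∃ s, l.idxFun s = none ∧ l'.idxFun s = none
  · obtain ⟨s, hs, hs'⟩ := hs
    have hxs := congrFun hx s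
    have hys := congrFun hy s
    simp only [Line.coe_apply, Line.map, hs, hs', Option.map_none, Option.getD_none] at hxs hys
    rwa [hxs, hys]
  · push Not at hs
    obtain ⟨s, hs₁⟩ := l.proper
    obtain ⟨s', hs₁'⟩ := l'.proper
    obtain ⟨c', hc'⟩ := Option.ne_none_iff_exists'.mp (hs s hs₁)
    obtain ⟨c, hc⟩ := Option.ne_none_iff_exists'.mp fun h => hs s' h hs₁'
    have hxs := congrFun hx s
    have hys := congrFun hy s
    have hxs' := congrFun hx s'
    have hys' := congrFun hy s'
    simp only [Line.coe_apply, Line.map, hs₁, hc', hs₁', hc, Option.map_none, Option.map_some,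
      Option.getD_none, Option.getD_some] at hxs hys hxs' hys'
    rw [hxs, hys]
    rw [← hxs', ← hys'] at h
    exact (c'.2.adj_iff i j).mpr ((c.2.adj_iff i j).mp h)

lemma amalgamAdj_lineEmb_iff (he : Injective e) (l : Line (P.Copy R e) ι) (x y : P.V) :
    amalgamAdj (lineEmb l x) (lineEmb l y) ↔ P.graph.Adj x y := by
  refine ⟨?_, fun h => ⟨l, x, y, h, rfl, rfl⟩⟩
  rintro ⟨l', x', y', h, hx, hy⟩
  cases hpx : partialInv e (P.part x) with
  | none =>
    obtain ⟨rfl, rfl⟩ := eq_of_lineEmb_eq_of_partialInv_eq_none he hpx hx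
    rwa [← lineEmb_injective he l' hy]
  | some i =>
    cases hpy : partialInv e (P.part y) with
    | none =>
      obtain ⟨rfl, rfl⟩ := eq_of_lineEmb_eq_of_partialInv_eq_none he hpy hy
      rwa [← lineEmb_injective he l' hx]
    | some j =>
      exact adj_of_line_apply_eq
        (line_apply_eq_of_lineEmb_eq_of_partialInv_eq_some he hpx hx).symm
        (line_apply_eq_of_lineEmb_eq_of_partialInv_eq_some he hpy hy).symm h

lemma lineEmb_comp_of_isCopy (he : Injective e) (l : Line (P.Copy R e) ι) {f : β → P.V}
    (hf : P.IsCopy R e f) : lineEmb l ∘ f = copyTuple (l ⟨f, hf⟩) := by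
  funext j
  rw [comp_apply, lineEmb_of_partialInv_eq_some (by rw [hf.part_apply]; exact partialInv_left he j)]
  exact congrArg (fun w => Sum.inl (j, w)) (Line.map_apply (fun c : P.Copy R e => c.1 j) l ⟨f, hf⟩)

def amalgamPayload : AmalgamV P R e ι → Lex (ι → P.V) ⊕ₗ (P.V ×ₗ Line (P.Copy R e) ι) :=
  Sum.elim (fun w => toLex (.inl (toLex w.2))) (fun q => toLex (.inr (toLex (q.2, q.1))))

def amalgamKey (u : AmalgamV P R e ι) :
    Λ ×ₗ (Lex (ι → P.V) ⊕ₗ (P.V ×ₗ Line (P.Copy R e) ι)) :=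
  toLex (amalgamPart u, amalgamPayload u)

lemma amalgamKey_injective (he : Injective e) :
    Injective (amalgamKey (P := P) (R := R) (e := e) (ι := ι)) := by
  rintro (⟨j, w⟩ | ⟨l, x⟩) (⟨j', w'⟩ | ⟨l', x'⟩) h <;>
    simp only [amalgamKey, amalgamPart, amalgamPayload, Sum.elim_inl, Sum.elim_inr,
      EmbeddingLike.apply_eq_iff_eq, Prod.mk.injEq, Sum.inl.injEq, Sum.inr.injEq, reduceCtorEq,
      and_false] at h
  · obtain ⟨hj, rfl⟩ := h
    rw [he hj]
  · obtain ⟨-, rfl, rfl⟩ := h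
    rfl

section Order

variable [LinearOrder ι] [WellFoundedLT ι] [LinearOrder (Line (P.Copy R e) ι)]

lemma lineEmb_strictMono (he : Injective e) (l : Line (P.Copy R e) ι) :
    StrictMono fun x => amalgamKey (lineEmb l x) := by
  intro x y hxy
  simp only [amalgamKey, Prod.Lex.toLex_lt_toLex, amalgamPart_lineEmb he]
  rcases (P.monotone_part hxy.le).lt_or_eq with hp | hp
  · exact .inl hp
  refine .inr ⟨hp, ?_⟩
  cases hx : partialInv e (P.part x) with
  | none =>
    rw [lineEmb_of_partialInv_eq_none hx, lineEmb_of_partialInv_eq_none (hp ▸ hx)]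
    exact Sum.Lex.inr_lt_inr_iff.mpr (Prod.Lex.toLex_lt_toLex.mpr (.inl hxy))
  | some j =>
    rw [lineEmb_of_partialInv_eq_some hx, lineEmb_of_partialInv_eq_some (hp ▸ hx)]
    exact Sum.Lex.inl_lt_inl_iff.mpr (Pi.toLex_strictMono ((l.map _).strictMono hxy))

variable (P R ι) [Finite β] [Finite ι]

noncomputable def amalgam (he : Injective e) : Picture Λ where
  V := AmalgamV P R e ι
  finite := by unfold AmalgamV; infer_instance
  graph :=
    { Adj := amalgamAdj
      symm := ⟨by
        rintro _ _ ⟨l, x, y, h, rfl, rfl⟩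
        exact ⟨l, y, x, h.symm, rfl, rfl⟩⟩
      loopless := ⟨by
        rintro _ ⟨l, x, y, h, rfl, hyx⟩
        exact h.ne (lineEmb_injective he l hyx).symm⟩ }
  order := LinearOrder.lift' amalgamKey (amalgamKey_injective he)
  part := amalgamPart
  monotone_part u v h := Prod.Lex.monotone_fst (amalgamKey u) (amalgamKey v) h

end Order

end Amalgam

theorem exists_mono_copies (κ : Type*) [Finite κ] [Finite β] (P : Picture Λ) (R : β → β → Prop)
    {e : β → Λ} (he : Injective e) :
    ∃ Q : Picture Λ, ∀ χ : (β → Q.V) → κ, ∃ F, IsEmbedding P Q F ∧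
      ∃ i, ∀ f, P.IsCopy R e f → χ (F ∘ f) = i := by
  obtain ⟨ι, _, hι⟩ := Line.exists_mono_in_high_dimension (P.Copy R e) κ
  let : LinearOrder ι := IsWellOrder.linearOrder WellOrderingRel
  let : LinearOrder (Line (P.Copy R e) ι) := IsWellOrder.linearOrder WellOrderingRel
  refine ⟨P.amalgam R ι he, fun χ => ?_⟩
  obtain ⟨l, i, hl⟩ := hι fun p => χ (copyTuple p)
  exact ⟨lineEmb l, ⟨amalgamPart_lineEmb he l, amalgamAdj_lineEmb_iff he l,
    lineEmb_strictMono he l⟩, i, fun f hf =>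
      (congrArg χ (lineEmb_comp_of_isCopy he l hf)).trans (hl ⟨f, hf⟩)⟩

theorem exists_mono_copies_of_finset (κ : Type*) [Finite κ] [Nonempty κ] [Finite β]
    (P : Picture Λ) (R : β → β → Prop) (es : Finset (β → Λ)) (hes : ∀ e ∈ es, Injective e) :
    ∃ Q : Picture Λ, ∀ χ : (β → Q.V) → κ, ∃ F, IsEmbedding P Q F ∧
      ∃ c : (β → Λ) → κ, ∀ e ∈ es, ∀ f, P.IsCopy R e f → χ (F ∘ f) = c e := by
  classical
  induction es using Finset.induction_on generalizing P with
  | empty => exact ⟨P, fun χ => ⟨id, isEmbedding_id P, fun _ => Classical.arbitrary κ, by simp⟩⟩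
  | insert e es he ih =>
    obtain ⟨Q₁, hQ₁⟩ := exists_mono_copies κ P R (hes e (mem_insert_self e es))
    obtain ⟨Q, hQ⟩ := ih Q₁ fun e' h => hes e' (mem_insert_of_mem h)
    refine ⟨Q, fun χ => ?_⟩
    obtain ⟨F, hF, c, hc⟩ := hQ χ
    obtain ⟨F₁, hF₁, i, hi⟩ := hQ₁ fun f => χ (F ∘ f)
    refine ⟨F ∘ F₁, hF.comp hF₁, update c e i, fun e' he' f hf => ?_⟩
    rcases mem_insert.mp he' with rfl | he'
    · rw [update_self]
      exact hi f hf
    · rw [update_of_ne (ne_of_mem_of_not_mem he' he), comp_assoc]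
      exact hc e' he' _ (hF₁.isCopy_comp hf)

variable {W : Type} [Finite W] [LinearOrder W]

-- One copy of `H` for every strictly monotone `φ : W → Fin N`; vertex `v` of that copy lies in
-- part `φ v`.
noncomputable def blowup (H : SimpleGraph W) (N : ℕ) : Picture (Fin N) where
  V := {φ : W → Fin N // StrictMono φ} × W
  graph :=
    { Adj u v := u.1 = v.1 ∧ H.Adj u.2 v.2
      symm := ⟨fun _ _ h => ⟨h.1.symm, h.2.symm⟩⟩
      loopless := ⟨fun _ h => h.2.ne rfl⟩ }
  order := LinearOrder.lift' (fun u => toLex (u.1.1 u.2, toLex u.1.1)) fun u v h => by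
    obtain ⟨hval, hφ⟩ := Prod.ext_iff.mp (toLex.injective h)
    have hφ : u.1 = v.1 := Subtype.ext (toLex.injective hφ)
    rw [hφ] at hval
    exact Prod.ext hφ (v.1.2.injective hval)
  part u := u.1.1 u.2
  monotone_part u v h := Prod.Lex.monotone_fst _ _ h

lemma isCopy_blowup {H : SimpleGraph W} {N : ℕ} {φ : W → Fin N} (hφ : StrictMono φ) {β : Type}
    {R : β → β → Prop} {g : β → W} (hg : ∀ x y, H.Adj (g x) (g y) ↔ R x y) :
    (blowup H N).IsCopy R (φ ∘ g) fun x => (⟨φ, hφ⟩, g x) :=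
  ⟨fun _ => rfl, fun x y => (and_iff_right rfl).trans (hg x y)⟩

def toOrdGraph (Q : Picture Λ) : OrdGraph where
  V := Q.V
  finite := Q.finite
  adj := Q.graph.Adj
  adj_symm _ _ h := h.symm
  adj_irrefl _ := Q.graph.loopless.irrefl _
  lt := (· < ·)
  lt_irrefl := lt_irrefl
  lt_trans _ _ _ := lt_trans
  lt_total := lt_trichotomy

lemma IsCopy.ordGraphEmb {Q : Picture Λ} {H : OrdGraph} {e : H.V → Λ} {f : H.V → Q.V}
    (hf : Q.IsCopy H.adj e f) (he : ∀ x y, H.lt x y → e x < e y) :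
    OrdGraph.Emb H Q.toOrdGraph f :=
  let := H.linearOrder
  have hfm : StrictMono f := hf.strictMono fun x y h => he x y h
  ⟨hfm.injective, fun x y => (hf.adj_iff x y).symm, fun _ _ h => hfm h⟩

end Picture

theorem orderedGraphs_ramsey_general (k : ℕ) (hk : 2 ≤ k) (G H : OrdGraph) :
    ∃ K : OrdGraph, ∀ χ : (G.V → K.V) → Fin k,
      ∃ w, OrdGraph.Emb H K w ∧ ∃ i : Fin k,
        ∀ g, OrdGraph.Emb G H g → χ (w ∘ g) = i := by
  classical
  let := G.linearOrder
  let := H.linearOrder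
  have := G.finite
  have := H.finite
  let := Fintype.ofFinite G.V
  let := Fintype.ofFinite H.V
  have : Nonempty (Fin k) := ⟨⟨0, by omega⟩⟩
  obtain ⟨N, hN⟩ := exists_strictMono_ramsey G.V H.V (Fin k)
  obtain ⟨Q, hQ⟩ := Picture.exists_mono_copies_of_finset (Fin k) (Picture.blowup H.graph N) G.adj
    {e | Injective e} fun e he => (mem_filter.mp he).2
  refine ⟨Q.toOrdGraph, fun χ => ?_⟩
  obtain ⟨F, hF, c, hc⟩ := hQ χ
  obtain ⟨φ, hφ, i, hi⟩ := hN c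
  have hw := hF.isCopy_comp (Picture.isCopy_blowup hφ (g := id) (R := H.adj) fun _ _ => Iff.rfl)
  refine ⟨_, hw.ordGraphEmb fun x y h => hφ h, i, fun g hg => ?_⟩
  have hgm : StrictMono g := fun x y h => hg.2.2 x y h
  rw [← hi g hgm]
  exact hc _ (by simpa using hφ.injective.comp hg.1) _
    (Picture.isCopy_blowup hφ fun x y => (hg.2.1 x y).symm)

/-- The class of all finite linearly ordered graphs has the Ramsey property. -/
theorem orderedGraphs_ramsey (k : ℕ) (hk : 2 ≤ k) (G H : OrdGraph)
    (hGH : ∃ f, OrdGraph.Emb G H f) :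
    ∃ K : OrdGraph, ∀ χ : (G.V → K.V) → Fin k,
      ∃ w, OrdGraph.Emb H K w ∧ ∃ i : Fin k,
        ∀ g, OrdGraph.Emb G H g → χ (w ∘ g) = i :=
  orderedGraphs_ramsey_general k hk G H
end

section
/- The class of all finite convexly ordered ultrametric spaces has the Ramsey property: for every integer k ≥ 2 and all finite convexly ordered ultrametric spaces U and V such that U embeds into V, there exists a finite convexly ordered ultrametric space W such that for every k-coloring of the set of embeddings of U into W there exist an embedding w : V ↪ W and a color i such that w ∘ g has color i for every embedding g : U ↪ V. -/
/-!
List a finite convexly ordered ultrametric space increasingly as `x₀ < x₁ < ⋯ < xₙ`. Convexity of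
balls forces `d(xᵢ, xⱼ) = max {d(xₜ, xₜ₊₁) | i ≤ t < j}`, so the space is the word of the ranks
of its consecutive distances, and embeddings are the increasing maps of points that preserve the
largest letter between consecutive points. The theorem thus becomes a Ramsey theorem for such
words over the alphabet `{0, …, m - 1}`, with `m` the number of distances of `Y`.

The word theorem is proved by induction on `m` and then on the length of the small word `A`. The
top letter `m` cuts the big word `B` into `t + 1` segments over the smaller alphabet, all of
which embed into one word `J`. One constructs a target in which every colouring admits a copy
of the chain `J m J m ⋯ m J` (with `k t + 1` copies of `J`) on which the colour of a copy of `A`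
only depends on the copy of `J` containing its first point; by pigeonhole `t + 1` copies of `J`
share a colour, and `B` embeds with one segment in each. The chain grows one `J` at a time. If
`A` has no top letter, a copy of `A` lies within one `J`, which is the induction on `m`.
Otherwise `A = A₀ m A₁` with `A₀` over the smaller alphabet; the copies of `A₁` are made
monochromatic for all the finitely many positions of `A₀` at once, by colouring with the product
of the colour sets and the induction on the length of `A`.
-/

/-- A finite convexly ordered ultrametric space: a finite set `U` with an ultrametric `dist`
(a metric satisfying `d(x,z) ≤ max (d(x,y)) (d(y,z))`) and a (strict) linear order `lt` such
that every closed ball is convex with respect to `lt`. -/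
structure ConvOrdUltra where
  U : Type
  finite : Finite U
  dist : U → U → ℝ
  dist_self : ∀ x, dist x x = 0
  eq_of_dist_eq_zero : ∀ x y, dist x y = 0 → x = y
  dist_comm : ∀ x y, dist x y = dist y x
  ultra : ∀ x y z, dist x z ≤ max (dist x y) (dist y z)
  lt : U → U → Prop
  lt_irrefl : ∀ x, ¬ lt x x
  lt_trans : ∀ x y z, lt x y → lt y z → lt x z
  lt_total : ∀ x y, lt x y ∨ x = y ∨ lt y x
  convex : ∀ u r x y z, dist u x ≤ r → dist u y ≤ r → lt x z → lt z y → dist u z ≤ r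

/-- An embedding of convexly ordered ultrametric spaces: an injective map preserving
distances and the linear orders. -/
def ConvOrdUltra.Emb (X Y : ConvOrdUltra) (f : X.U → Y.U) : Prop :=
  Function.Injective f ∧
  (∀ a b, Y.dist (f a) (f b) = X.dist a b) ∧
  (∀ a b, X.lt a b → Y.lt (f a) (f b))

theorem DependsOn.comp_postcomp {ι α β : Type*} {χ : (ι → α) → β} {s : Set ι}
    (hχ : DependsOn χ s) (f : α → α) : DependsOn (fun σ => χ (f ∘ σ)) s :=
  fun _ _ h => hχ fun i hi => congrArg f (h i hi)

namespace GapWord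

/-! A word `(n, c)` has the points `0, …, n`, the gap between `i` and `i + 1` carrying the letter
`c i`; letters and maps are total functions on `ℕ` whose values outside the word are ignored. -/

def gapMax (c : ℕ → ℕ) (x y : ℕ) : ℕ := (Finset.Ico x y).sup c

def LettersLT (m n : ℕ) (c : ℕ → ℕ) : Prop := ∀ i < n, c i < m

structure Emb (p : ℕ) (a : ℕ → ℕ) (n : ℕ) (c : ℕ → ℕ) (φ : ℕ → ℕ) : Prop where
  le_len : φ p ≤ n
  lt_succ : ∀ i < p, φ i < φ (i + 1)
  gapMax_succ : ∀ i < p, gapMax c (φ i) (φ (i + 1)) = a i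

/-- The partition arrow `(n, c) ⟶ (q, b) ^ (p, a)` for colourings with values in `κ`. -/
def Arrows (κ : Type) (n : ℕ) (c : ℕ → ℕ) (q : ℕ) (b : ℕ → ℕ) (p : ℕ) (a : ℕ → ℕ) : Prop :=
  ∀ χ : (ℕ → ℕ) → κ, DependsOn χ (Set.Iic p) →
    ∃ ψ, Emb q b n c ψ ∧ ∃ i, ∀ g, Emb p a q b g → χ (ψ ∘ g) = i

section gapMax

variable {c c' : ℕ → ℕ} {x y z : ℕ}

theorem gapMax_congr (h : ∀ t, x ≤ t → t < y → c t = c' t) : gapMax c x y = gapMax c' x y :=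
  Finset.sup_congr rfl fun t ht => h t (Finset.mem_Ico.1 ht).1 (Finset.mem_Ico.1 ht).2

@[simp]
theorem gapMax_self (c : ℕ → ℕ) (x : ℕ) : gapMax c x x = 0 := by
  simp [gapMax]

theorem gapMax_add_one (c : ℕ → ℕ) (x : ℕ) : gapMax c x (x + 1) = c x := by
  simp [gapMax]

theorem gapMax_split (hxy : x ≤ y) (hyz : y ≤ z) :
    gapMax c x z = max (gapMax c x y) (gapMax c y z) := by
  rw [gapMax, ← Finset.Ico_union_Ico_eq_Ico hxy hyz, Finset.sup_union]; rfl

theorem le_gapMax {t : ℕ} (hxt : x ≤ t) (hty : t < y) : c t ≤ gapMax c x y :=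
  Finset.le_sup (Finset.mem_Ico.2 ⟨hxt, hty⟩)

theorem gapMax_le {L : ℕ} (h : ∀ t, x ≤ t → t < y → c t ≤ L) : gapMax c x y ≤ L :=
  Finset.sup_le fun t ht => h t (Finset.mem_Ico.1 ht).1 (Finset.mem_Ico.1 ht).2

theorem gapMax_lt {L : ℕ} (hxy : x < y) (h : ∀ t, x ≤ t → t < y → c t < L) :
    gapMax c x y < L :=
  (Finset.sup_lt_iff (Nat.zero_lt_of_lt (h x le_rfl hxy))).2
    fun t ht => h t (Finset.mem_Ico.1 ht).1 (Finset.mem_Ico.1 ht).2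

theorem gapMax_add_add (c : ℕ → ℕ) (s x y : ℕ) :
    gapMax c (x + s) (y + s) = gapMax (fun t => c (t + s)) x y := by
  rw [gapMax, ← Finset.image_add_right_Ico, Finset.sup_image]; rfl

theorem gapMax_mono {x' y' : ℕ} (hx : x' ≤ x) (hy : y ≤ y') :
    gapMax c x y ≤ gapMax c x' y' :=
  gapMax_le fun _ h1 h2 => le_gapMax (hx.trans h1) (h2.trans_le hy)

end gapMax

theorem LettersLT.mono {m m' n : ℕ} {c : ℕ → ℕ} (h : LettersLT m n c) (hm : m ≤ m') :
    LettersLT m' n c :=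
  fun i hi => (h i hi).trans_le hm

namespace Emb

variable {p q n : ℕ} {a b c : ℕ → ℕ} {φ ψ : ℕ → ℕ}

theorem strictMonoOn (h : Emb p a n c φ) : StrictMonoOn φ (Set.Iic p) :=
  strictMonoOn_Iic_of_lt_succ fun i hi => h.lt_succ i hi

theorem lt_of_lt (h : Emb p a n c φ) {i j : ℕ} (hij : i < j) (hj : j ≤ p) : φ i < φ j :=
  h.strictMonoOn (Set.mem_Iic.2 (hij.le.trans hj)) (Set.mem_Iic.2 hj) hij

theorem le_of_le (h : Emb p a n c φ) {i j : ℕ} (hij : i ≤ j) (hj : j ≤ p) : φ i ≤ φ j :=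
  h.strictMonoOn.monotoneOn (Set.mem_Iic.2 (hij.trans hj)) (Set.mem_Iic.2 hj) hij

theorem le_len_of_le (h : Emb p a n c φ) {i : ℕ} (hi : i ≤ p) : φ i ≤ n :=
  (h.le_of_le hi le_rfl).trans h.le_len

theorem gapMax_eq (h : Emb p a n c φ) {i j : ℕ} (hij : i ≤ j) (hj : j ≤ p) :
    gapMax c (φ i) (φ j) = gapMax a i j := by
  induction j, hij using Nat.le_induction with
  | base => simp
  | succ j hij ih =>
    rw [gapMax_split (h.le_of_le hij (by omega)) (h.le_of_le (Nat.le_succ j) hj),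
      gapMax_split hij (Nat.le_succ j), ih (by omega), h.gapMax_succ j (by omega),
      gapMax_add_one]

protected theorem id : Emb p a p a id :=
  ⟨le_rfl, fun i _ => Nat.lt_succ_self i, fun i _ => gapMax_add_one a i⟩

theorem comp (hφ : Emb p a q b φ) (hψ : Emb q b n c ψ) : Emb p a n c (ψ ∘ φ) where
  le_len := hψ.le_len_of_le hφ.le_len
  lt_succ i hi := hψ.lt_of_lt (hφ.lt_succ i hi) (hφ.le_len_of_le (by omega))
  gapMax_succ i hi := by
    rw [Function.comp_apply, Function.comp_apply,
      hψ.gapMax_eq (hφ.lt_succ i hi).le (hφ.le_len_of_le (by omega)), hφ.gapMax_succ i hi]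

theorem take (h : Emb p a n c φ) {α : ℕ} (hα : α ≤ p) : Emb α a n c φ :=
  ⟨h.le_len_of_le hα, fun i hi => h.lt_succ i (by omega), fun i hi => h.gapMax_succ i (by omega)⟩

theorem drop (h : Emb p a n c φ) {j : ℕ} (hj : j ≤ p) :
    Emb (p - j) (fun i => a (i + j)) n c (fun i => φ (i + j)) := by
  refine ⟨?_, fun i hi => ?_, fun i hi => ?_⟩
  · exact h.le_len_of_le (by omega)
  · simpa only [Nat.add_right_comm] using h.lt_succ (i + j) (by omega)
  · simpa only [Nat.add_right_comm] using h.gapMax_succ (i + j) (by omega)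

theorem lt_of_lettersLT {m : ℕ} (hφ : Emb p a n c φ) (hc : LettersLT m n c) {i : ℕ} (hi : i < p) :
    a i < m := by
  rw [← hφ.gapMax_succ i hi]
  exact gapMax_lt (hφ.lt_succ i hi) fun t _ ht => hc t (ht.trans_le (hφ.le_len_of_le hi))

theorem congr_source {a' : ℕ → ℕ} (h : Emb p a n c φ) (ha : ∀ i < p, a i = a' i) :
    Emb p a' n c φ :=
  ⟨h.le_len, h.lt_succ, fun i hi => (h.gapMax_succ i hi).trans (ha i hi)⟩

theorem congr_target {c' : ℕ → ℕ} (h : Emb p a n c φ) (hc : ∀ t < n, c t = c' t) :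
    Emb p a n c' φ :=
  ⟨h.le_len, h.lt_succ, fun i hi => by
    rw [← h.gapMax_succ i hi]
    exact gapMax_congr fun t _ ht => (hc t (ht.trans_le (h.le_len_of_le (by omega)))).symm⟩

end Emb

def cat (d : ℕ) (D : ℕ → ℕ) (L : ℕ) (V : ℕ → ℕ) : ℕ → ℕ :=
  fun i => if i < d then D i else if i = d then L else V (i - (d + 1))

def glue (α d : ℕ) (h ρ : ℕ → ℕ) : ℕ → ℕ :=
  fun i => if i ≤ α then h i else ρ (i - (α + 1)) + (d + 1)

section cat

variable {d v L : ℕ} {D V : ℕ → ℕ}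

theorem cat_of_lt {i : ℕ} (h : i < d) : cat d D L V i = D i := if_pos h

@[simp]
theorem cat_self : cat d D L V d = L := by simp [cat]

@[simp]
theorem cat_add (j : ℕ) : cat d D L V (j + (d + 1)) = V j := by
  simp [cat, show ¬ j + (d + 1) < d by omega, show j + (d + 1) ≠ d by omega]

theorem LettersLT.cat (hD : LettersLT (L + 1) d D) (hV : LettersLT (L + 1) v V) :
    LettersLT (L + 1) (d + 1 + v) (cat d D L V) := by
  intro i hi
  rcases lt_trichotomy i d with h | rfl | h
  · rw [cat_of_lt h]; exact hD i h
  · simp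
  · obtain ⟨j, rfl⟩ : ∃ j, i = j + (d + 1) := ⟨i - (d + 1), by omega⟩
    rw [cat_add]; exact hV j (by omega)

theorem gapMax_cat_of_le {x y : ℕ} (hy : y ≤ d) : gapMax (cat d D L V) x y = gapMax D x y :=
  gapMax_congr fun _ _ ht => cat_of_lt (by omega)

theorem gapMax_cat_add_add (x y : ℕ) :
    gapMax (cat d D L V) (x + (d + 1)) (y + (d + 1)) = gapMax V x y := by
  simp only [gapMax_add_add, cat_add]

theorem gapMax_cat_of_le_of_lt {x y : ℕ} (hD : LettersLT (L + 1) d D) (hV : LettersLT (L + 1) v V)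
    (hx : x ≤ d) (hy : d < y) (hyv : y ≤ d + 1 + v) : gapMax (cat d D L V) x y = L :=
  le_antisymm (gapMax_le fun t _ ht => Nat.lt_succ_iff.1 ((hD.cat hV) t (by omega)))
    ((cat_self (d := d) (D := D) (L := L) (V := V)).symm.le.trans (le_gapMax hx hy))

end cat

section glue

variable {α d : ℕ} {h ρ : ℕ → ℕ}

theorem glue_of_le {i : ℕ} (hi : i ≤ α) : glue α d h ρ i = h i := if_pos hi

theorem glue_of_lt {i : ℕ} (hi : α < i) : glue α d h ρ i = ρ (i - (α + 1)) + (d + 1) :=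
  if_neg (by omega)

@[simp]
theorem glue_add (j : ℕ) : glue α d h ρ (j + (α + 1)) = ρ j + (d + 1) := by
  rw [glue_of_lt (by omega), Nat.add_sub_cancel]

end glue

namespace Emb

variable {p q n d v L α : ℕ} {a A B D V : ℕ → ℕ} {ξ h ρ : ℕ → ℕ}

theorem glue (hD : LettersLT (L + 1) d D) (hV : LettersLT (L + 1) v V) (hh : Emb α A d D h)
    (hρ : Emb q B v V ρ) :
    Emb (α + 1 + q) (cat α A L B) (d + 1 + v) (cat d D L V) (GapWord.glue α d h ρ) := by
  refine ⟨?_, fun i hi => ?_, fun i hi => ?_⟩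
  · rw [show α + 1 + q = q + (α + 1) by omega, glue_add]
    have := hρ.le_len; omega
  · rcases lt_trichotomy i α with hi' | rfl | hi'
    · rw [glue_of_le hi'.le, glue_of_le hi']; exact hh.lt_succ i hi'
    · rw [glue_of_le le_rfl, show i + 1 = 0 + (i + 1) by omega, glue_add]
      have := hh.le_len; omega
    · obtain ⟨j, rfl⟩ : ∃ j, i = j + (α + 1) := ⟨i - (α + 1), by omega⟩
      rw [glue_add, Nat.add_right_comm, glue_add]
      have := hρ.lt_succ j (by omega); omega
  · rcases lt_trichotomy i α with hi' | rfl | hi'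
    · rw [glue_of_le hi'.le, glue_of_le hi', gapMax_cat_of_le (hh.le_len_of_le hi'), cat_of_lt hi']
      exact hh.gapMax_succ i hi'
    · rw [glue_of_le le_rfl, show i + 1 = 0 + (i + 1) by omega, glue_add, cat_self]
      have := hρ.le_len_of_le (Nat.zero_le q)
      exact gapMax_cat_of_le_of_lt hD hV hh.le_len (by omega) (by omega)
    · obtain ⟨j, rfl⟩ : ∃ j, i = j + (α + 1) := ⟨i - (α + 1), by omega⟩
      rw [glue_add, Nat.add_right_comm, glue_add, gapMax_cat_add_add, cat_add]
      exact hρ.gapMax_succ j (by omega)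

theorem of_cat_left (hξ : Emb p a (d + 1 + v) (cat d D L V) ξ) (h : ξ p ≤ d) : Emb p a d D ξ :=
  ⟨h, hξ.lt_succ, fun i hi => by
    rw [← gapMax_cat_of_le (V := V) (L := L) ((hξ.le_of_le (by omega) le_rfl).trans h)]
    exact hξ.gapMax_succ i hi⟩

theorem of_cat_right (hξ : Emb p a (d + 1 + v) (cat d D L V) ξ) (h : d < ξ 0) :
    Emb p a v V (fun i => ξ i - (d + 1)) := by
  have hd : ∀ i ≤ p, ξ i = ξ i - (d + 1) + (d + 1) := fun i hi => by
    have := hξ.le_of_le (Nat.zero_le i) hi; omega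
  refine ⟨?_, fun i hi => ?_, fun i hi => ?_⟩
  · have := hξ.le_len; have := hd p le_rfl; omega
  · have := hξ.lt_succ i hi; have := hd i hi.le; have := hd (i + 1) hi; omega
  · rw [← gapMax_cat_add_add (D := D) (L := L), ← hd i hi.le, ← hd (i + 1) hi]
    exact hξ.gapMax_succ i hi

theorem le_of_cat (hξ : Emb p a (d + 1 + v) (cat d D L V) ξ) {β : ℕ} (ha : ∀ i < β, a i < L)
    (hβ : β ≤ p) (h0 : ξ 0 ≤ d) : ξ β ≤ d := by
  by_contra! hlt
  have hβ0 : 0 < β := Nat.pos_of_ne_zero fun h => by subst h; omega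
  have hL : L ≤ gapMax a 0 β :=
    calc L = cat d D L V d := cat_self.symm
      _ ≤ gapMax (cat d D L V) (ξ 0) (ξ β) := le_gapMax h0 hlt
      _ = gapMax a 0 β := hξ.gapMax_eq (Nat.zero_le β) hβ
  have := gapMax_lt hβ0 fun t _ ht => ha t ht
  omega

theorem lt_of_cat (hξ : Emb p a (d + 1 + v) (cat d D L V) ξ) (hD : LettersLT L d D)
    (hα : α < p) (haα : a α = L) : d < ξ (α + 1) := by
  by_contra! hle
  have := hξ.gapMax_succ α hα
  rw [gapMax_cat_of_le hle, haα] at this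
  exact (gapMax_lt (hξ.lt_succ α hα) fun t _ ht => hD t (by omega)).ne this

end Emb

/-- The letters of `J L J L ⋯` for `J = (e, cJ)`; its prefix of length `M * (e + 1) + e` is the
chain of `M + 1` copies of `J`, and point `x` lies in the copy number `x / (e + 1)`. -/
def repeatSep (e : ℕ) (cJ : ℕ → ℕ) (L t : ℕ) : ℕ :=
  if t % (e + 1) = e then L else cJ (t % (e + 1))

section repeatSep

variable {e L : ℕ} {cJ : ℕ → ℕ}

theorem repeatSep_mul_add (j : ℕ) {t : ℕ} (ht : t < e) :
    repeatSep e cJ L (j * (e + 1) + t) = cJ t := by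
  simp [repeatSep, Nat.mod_eq_of_lt (ht.trans (Nat.lt_succ_self e)), ht.ne]

theorem repeatSep_of_lt {t : ℕ} (ht : t < e) : repeatSep e cJ L t = cJ t := by
  simpa using repeatSep_mul_add (cJ := cJ) (L := L) 0 ht

theorem repeatSep_mul_add_self (j : ℕ) : repeatSep e cJ L (j * (e + 1) + e) = L := by
  simp [repeatSep]

theorem repeatSep_le (hJ : LettersLT (L + 1) e cJ) (t : ℕ) : repeatSep e cJ L t ≤ L := by
  unfold repeatSep
  split_ifs with h
  · exact le_rfl
  · exact Nat.lt_succ_iff.1 (hJ _ (by have := Nat.mod_lt t (Nat.add_one_pos e); omega))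

theorem cat_repeatSep : cat e cJ L (repeatSep e cJ L) = repeatSep e cJ L := by
  funext t
  rcases lt_trichotomy t e with ht | rfl | ht
  · rw [cat_of_lt ht, repeatSep_of_lt ht]
  · simpa using (repeatSep_mul_add_self (cJ := cJ) (L := L) 0).symm
  · obtain ⟨j, rfl⟩ : ∃ j, t = j + (e + 1) := ⟨t - (e + 1), by omega⟩
    simp [repeatSep, Nat.add_mod_right]

end repeatSep

def ArrowsByBlock (κ : Type) (n : ℕ) (c : ℕ → ℕ) (e : ℕ) (cJ : ℕ → ℕ) (L M p : ℕ) (a : ℕ → ℕ) :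
    Prop :=
  ∀ χ : (ℕ → ℕ) → κ, DependsOn χ (Set.Iic p) →
    ∃ Θ, Emb (M * (e + 1) + e) (repeatSep e cJ L) n c Θ ∧ ∃ col : ℕ → κ,
      ∀ ξ, Emb p a (M * (e + 1) + e) (repeatSep e cJ L) ξ → χ (Θ ∘ ξ) = col (ξ 0 / (e + 1))

namespace ArrowsByBlock

open Fin.NatCast

variable {κ : Type} {m e d n v M p : ℕ} {cJ cD c V a : ℕ → ℕ}

/-- Copies of `(p, a)` that start after the first copy of `J` lie in the chain of `M + 1` copies,
so only those starting in the first copy need `hfirst`. -/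
theorem succ (hD : LettersLT (m + 1) d cD) (hV : LettersLT (m + 1) v V)
    (hM : ArrowsByBlock κ n c e cJ m M p a)
    (hfirst : ∀ χ : (ℕ → ℕ) → κ, DependsOn χ (Set.Iic p) →
      ∃ ψ Φ i, Emb e cJ d cD ψ ∧ Emb n c v V Φ ∧
        ∀ Θ, Emb (M * (e + 1) + e) (repeatSep e cJ m) n c Θ →
        ∀ ξ, Emb p a (e + 1 + (M * (e + 1) + e)) (cat e cJ m (repeatSep e cJ m)) ξ → ξ 0 ≤ e →
          χ (glue e d ψ (Φ ∘ Θ) ∘ ξ) = i) :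
    ArrowsByBlock κ (d + 1 + v) (cat d cD m V) e cJ m (M + 1) p a := by
  intro χ hχ
  obtain ⟨ψ, Φ, i, hψ, hΦ, hi⟩ := hfirst χ hχ
  obtain ⟨Θ, hΘ, col, hcol⟩ := hM _ (hχ.comp_postcomp fun x => Φ x + (d + 1))
  rw [show (M + 1) * (e + 1) + e = e + 1 + (M * (e + 1) + e) by ring, ← cat_repeatSep]
  refine ⟨glue e d ψ (Φ ∘ Θ), hψ.glue hD hV (hΘ.comp hΦ),
    fun j => if j = 0 then i else col (j - 1), fun ξ hξ => ?_⟩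
  dsimp only
  rcases le_or_gt (ξ 0) e with h0 | h0
  · rw [hi Θ hΘ ξ hξ h0, Nat.div_eq_of_lt (by omega), if_pos rfl]
  · have hidx : ξ 0 / (e + 1) = (ξ 0 - (e + 1)) / (e + 1) + 1 := by
      rw [← Nat.add_div_right _ (Nat.succ_pos e), Nat.sub_add_cancel h0]
    rw [hidx, if_neg (Nat.succ_ne_zero _), Nat.add_sub_cancel]
    refine Eq.trans (hχ fun j hj => ?_) (hcol _ (hξ.of_cat_right h0))
    exact glue_of_lt (h0.trans_le (hξ.le_of_le (Nat.zero_le j) hj))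

theorem succ_of_lettersLT (ha : LettersLT m p a) (hD : LettersLT m d cD)
    (hc : LettersLT (m + 1) n c)
    (hDarr : Arrows κ d cD e cJ p a) (hM : ArrowsByBlock κ n c e cJ m M p a) :
    ArrowsByBlock κ (d + 1 + n) (cat d cD m c) e cJ m (M + 1) p a := by
  refine hM.succ (hD.mono (Nat.le_succ m)) hc fun χ hχ => ?_
  obtain ⟨ψ, hψ, i, hi⟩ := hDarr χ hχ
  refine ⟨ψ, id, i, hψ, Emb.id, fun Θ _ ξ hξ h0 => ?_⟩
  have hξ' := hξ.of_cat_left (hξ.le_of_cat ha le_rfl h0)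
  exact (hχ fun j hj => glue_of_le (hξ'.le_len_of_le hj)).trans (hi ξ hξ')

theorem succ_of_top {α : ℕ} (hα : α < p) (haα : a α = m) (hlow : ∀ i < α, a i < m)
    (hJ : LettersLT m e cJ) (hD : LettersLT m d cD) (hV : LettersLT (m + 1) v V)
    (hDarr : Arrows κ d cD e cJ α a)
    (hVarr : Arrows ((Fin (α + 1) → Fin (d + 1)) → κ) v V n c (p - (α + 1))
      (fun j => a (j + (α + 1))))
    (hM : ArrowsByBlock κ n c e cJ m M p a) :
    ArrowsByBlock κ (d + 1 + v) (cat d cD m V) e cJ m (M + 1) p a := by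
  refine hM.succ (hD.mono (Nat.le_succ m)) hV fun χ hχ => ?_
  -- the colour of a copy of the tail, for each possible position of the head in `(d, cD)`
  let F : (ℕ → ℕ) → (Fin (α + 1) → Fin (d + 1)) → κ :=
    fun σ s => χ (glue α d (fun i : ℕ => (s (i : Fin (α + 1)) : ℕ)) σ)
  have hF : DependsOn F (Set.Iic (p - (α + 1))) := fun σ σ' h => funext fun s => hχ fun i hi => by
    rcases le_or_gt i α with hiα | hiα
    · rw [glue_of_le hiα, glue_of_le hiα]
    · rw [glue_of_lt hiα, glue_of_lt hiα, h _ (by simp only [Set.mem_Iic] at hi ⊢; omega)]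
  obtain ⟨Φ, hΦ, colTail, hcolTail⟩ := hVarr F hF
  obtain ⟨ψ, hψ, i, hi⟩ := hDarr (fun h => colTail fun j : Fin (α + 1) => ((h j : ℕ) : Fin (d + 1)))
    fun h h' hh => congrArg colTail <| funext fun j => by
      rw [hh j (Set.mem_Iic.2 (Nat.lt_succ_iff.1 j.2))]
  refine ⟨ψ, Φ, i, hψ, hΦ, fun Θ hΘ ξ hξ h0 => ?_⟩
  have hhead : Emb α a e cJ ξ := (hξ.take hα.le).of_cat_left (hξ.le_of_cat hlow hα.le h0)
  have htail := (hξ.drop (Nat.succ_le_of_lt hα)).of_cat_right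
    (by simpa using hξ.lt_of_cat hJ hα haα)
  refine (hχ fun j hj => ?_).trans
    ((congrFun (hcolTail _ (htail.comp hΘ)) _).trans (hi ξ hhead))
  rw [Function.comp_apply]
  rcases le_or_gt j α with hjα | hjα
  · have hψj := hψ.le_len_of_le (hhead.le_len_of_le hjα)
    rw [glue_of_le (hhead.le_len_of_le hjα), glue_of_le hjα, Function.comp_apply,
      Fin.val_cast_of_lt (Nat.lt_succ_of_le hjα), Fin.val_cast_of_lt (Nat.lt_succ_of_le hψj)]
  · have hej : e < ξ j := (hξ.lt_of_cat hJ hα haα).trans_le (hξ.le_of_le hjα hj)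
    rw [glue_of_lt hej, glue_of_lt hjα]
    simp [Nat.sub_add_cancel (Nat.succ_le_of_lt hjα)]

theorem zero_of_arrows {L : ℕ} (hDarr : Arrows κ d cD e cJ p a) :
    ArrowsByBlock κ d cD e cJ L 0 p a := by
  intro χ hχ
  obtain ⟨ψ, hψ, i, hi⟩ := hDarr χ hχ
  simp only [zero_mul, zero_add]
  exact ⟨ψ, hψ.congr_source fun t ht => (repeatSep_of_lt ht).symm, fun _ => i,
    fun ξ hξ => hi ξ (hξ.congr_target fun t ht => repeatSep_of_lt ht)⟩

theorem zero_of_top {α : ℕ} (hJ : LettersLT m e cJ) (hα : α < p) (haα : a α = m) :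
    ArrowsByBlock κ e cJ e cJ m 0 p a := by
  intro χ _
  simp only [zero_mul, zero_add]
  refine ⟨id, Emb.id.congr_target fun t ht => repeatSep_of_lt ht, fun _ => χ id, fun ξ hξ => ?_⟩
  have := (hξ.congr_target fun t ht => repeatSep_of_lt ht).lt_of_lettersLT hJ hα
  omega

end ArrowsByBlock

def WordRamsey (m p : ℕ) : Prop :=
  ∀ (κ : Type) [Fintype κ] (a : ℕ → ℕ) (q : ℕ) (b : ℕ → ℕ), LettersLT m p a → LettersLT m q b →
    ∃ n c, LettersLT m n c ∧ Arrows κ n c q b p a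

theorem exists_arrowsByBlock {m p e : ℕ} {a cJ : ℕ → ℕ} (hm : ∀ p, WordRamsey m p)
    (hlt : ∀ p' < p, WordRamsey (m + 1) p') (κ : Type) [Fintype κ] (ha : LettersLT (m + 1) p a)
    (hJ : LettersLT m e cJ) (M : ℕ) :
    ∃ n c, LettersLT (m + 1) n c ∧ ArrowsByBlock κ n c e cJ m M p a := by
  classical
  by_cases htop : ∃ α < p, a α = m
  · obtain ⟨hα, haα⟩ := Nat.find_spec htop
    have hlow : ∀ i < Nat.find htop, a i < m := fun i hi => by
      have := Nat.find_min htop hi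
      have := ha i (by omega)
      omega
    obtain ⟨d, cD, hD, hDarr⟩ := hm _ κ a e cJ hlow hJ
    induction M with
    | zero => exact ⟨e, cJ, hJ.mono (Nat.le_succ m), .zero_of_top hJ hα haα⟩
    | succ M ih =>
      obtain ⟨n, c, hc, hM⟩ := ih
      obtain ⟨v, V, hV, hVarr⟩ := hlt (p - (Nat.find htop + 1)) (by omega)
        ((Fin (Nat.find htop + 1) → Fin (d + 1)) → κ) (fun j => a (j + (Nat.find htop + 1))) n c
        (fun j hj => ha _ (by omega)) hc
      exact ⟨_, _, (hD.mono (Nat.le_succ m)).cat hV,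
        hM.succ_of_top hα haα hlow hJ hD hV hDarr hVarr⟩
  · simp only [not_exists, not_and] at htop
    have ha' : LettersLT m p a := fun i hi =>
      lt_of_le_of_ne (Nat.lt_succ_iff.1 (ha i hi)) (htop i hi)
    obtain ⟨d, cD, hD, hDarr⟩ := hm p κ a e cJ ha' hJ
    induction M with
    | zero => exact ⟨d, cD, hD.mono (Nat.le_succ m), .zero_of_arrows hDarr⟩
    | succ M ih =>
      obtain ⟨n, c, hc, hM⟩ := ih
      exact ⟨_, _, (hD.mono (Nat.le_succ m)).cat hc, hM.succ_of_lettersLT ha' hD hc hDarr⟩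

/-- The segment of `b` after its `s`-th top letter goes into the copy `jj s` of `J`, at the
positions `pos`. -/
theorem emb_repeatSep {m q e M : ℕ} {b cJ pos jj : ℕ → ℕ} (hb : LettersLT (m + 1) q b)
    (hJ : LettersLT m e cJ) (hpos : ∀ x ≤ q, pos x ≤ e)
    (hstep : ∀ x < q, b x < m → pos (x + 1) = pos x + 1 ∧ cJ (pos x) = b x)
    (hjj : StrictMonoOn jj (Set.Iic (Nat.count (b · = m) q)))
    (hjjM : jj (Nat.count (b · = m) q) ≤ M) :
    Emb q b (M * (e + 1) + e) (repeatSep e cJ m)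
      (fun x => jj (Nat.count (b · = m) x) * (e + 1) + pos x) := by
  set blk := Nat.count (b · = m)
  have hblk : ∀ x ≤ q, blk x ≤ blk q := fun x hx => Nat.count_monotone _ hx
  have key : ∀ x < q, jj (blk x) * (e + 1) + pos x < jj (blk (x + 1)) * (e + 1) + pos (x + 1) ∧
      gapMax (repeatSep e cJ m) (jj (blk x) * (e + 1) + pos x)
        (jj (blk (x + 1)) * (e + 1) + pos (x + 1)) = b x := by
    intro x hx
    have hposx := hpos x hx.le
    rcases eq_or_lt_of_le (Nat.lt_succ_iff.1 (hb x hx)) with htop | hlow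
    · have hsucc : blk (x + 1) = blk x + 1 := by simp [blk, Nat.count_succ, htop]
      have hlt : jj (blk x) < jj (blk x + 1) :=
        hjj (Set.mem_Iic.2 (by have := hblk (x + 1) hx; omega))
          (Set.mem_Iic.2 (hsucc ▸ hblk (x + 1) hx)) (Nat.lt_succ_self _)
      have hmul : jj (blk x) * (e + 1) + (e + 1) ≤ jj (blk x + 1) * (e + 1) := by
        rw [← add_one_mul]; exact Nat.mul_le_mul_right _ hlt
      rw [hsucc, htop]
      refine ⟨by omega, le_antisymm (gapMax_le fun t _ _ => repeatSep_le (hJ.mono m.le_succ) t) ?_⟩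
      calc m = repeatSep e cJ m (jj (blk x) * (e + 1) + e) := (repeatSep_mul_add_self _).symm
        _ ≤ _ := le_gapMax (by omega) (by omega)
    · obtain ⟨hpos1, hcJ⟩ := hstep x hx hlow
      have hsucc : blk (x + 1) = blk x := by simp [blk, Nat.count_succ, hlow.ne]
      have hpose : pos x < e := by have := hpos (x + 1) hx; omega
      rw [hsucc, hpos1, ← add_assoc, gapMax_add_one, repeatSep_mul_add _ hpose, hcJ]
      exact ⟨Nat.lt_succ_self _, rfl⟩
  refine ⟨?_, fun x hx => (key x hx).1, fun x hx => (key x hx).2⟩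
  have := Nat.mul_le_mul_right (e + 1) ((hjj.monotoneOn (Set.mem_Iic.2 (hblk q le_rfl))
    (Set.mem_Iic.2 le_rfl) (hblk q le_rfl)).trans hjjM)
  have := hpos q le_rfl
  omega

theorem exists_strictMonoOn_monochromatic {κ : Type} [Fintype κ] (col : ℕ → κ) (t : ℕ) :
    ∃ (jj : ℕ → ℕ) (i : κ), StrictMonoOn jj (Set.Iic t) ∧ jj t ≤ Fintype.card κ * t ∧
      ∀ s ≤ t, col (jj s) = i := by
  classical
  obtain ⟨i, -, hi⟩ := Finset.exists_lt_card_fiber_of_mul_lt_card_of_maps_to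
    (s := Finset.range (Fintype.card κ * t + 1)) (t := Finset.univ) (f := col) (n := t)
    (fun _ _ => Finset.mem_univ _) (by simp)
  obtain ⟨S, hS, hcard⟩ := Finset.exists_subset_card_eq hi
  have hmem : ∀ s : Fin (t + 1), S.orderEmbOfFin hcard s ∈ _ := fun s =>
    hS (S.orderEmbOfFin_mem hcard s)
  simp only [Finset.mem_filter, Finset.mem_range] at hmem
  refine ⟨fun s => S.orderEmbOfFin hcard ⟨min s t, by omega⟩, i, fun s hs s' hs' hss' => ?_,
    by have := (hmem ⟨min t t, by omega⟩).1; dsimp only; omega, fun s _ => (hmem _).2⟩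
  simp only [Set.mem_Iic] at hs hs'
  exact (S.orderEmbOfFin hcard).strictMono (Fin.mk_lt_mk.2 (by omega))

theorem ArrowsByBlock.arrows {κ : Type} [Fintype κ] {n e L p q t : ℕ} {c cJ a b : ℕ → ℕ}
    (h : ArrowsByBlock κ n c e cJ L (Fintype.card κ * t) p a)
    (hη : ∀ jj : ℕ → ℕ, StrictMonoOn jj (Set.Iic t) → jj t ≤ Fintype.card κ * t →
      ∃ η, Emb q b (Fintype.card κ * t * (e + 1) + e) (repeatSep e cJ L) η ∧
        ∀ x ≤ q, ∃ s ≤ t, η x / (e + 1) = jj s) :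
    Arrows κ n c q b p a := by
  intro χ hχ
  obtain ⟨Θ, hΘ, col, hcol⟩ := h χ hχ
  obtain ⟨jj, i, hjj, hjjM, hi⟩ := exists_strictMonoOn_monochromatic col t
  obtain ⟨η, hη, hblock⟩ := hη jj hjj hjjM
  refine ⟨Θ ∘ η, hη.comp hΘ, i, fun g hg => ?_⟩
  obtain ⟨s, hs, hgs⟩ := hblock (g 0) (hg.le_len_of_le (Nat.zero_le p))
  exact (hcol _ (hg.comp hη)).trans ((congrArg col hgs).trans (hi s hs))

theorem exists_segmentWord {m q : ℕ} {b : ℕ → ℕ} (hb : LettersLT (m + 1) q b) :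
    ∃ (e : ℕ) (cJ pos : ℕ → ℕ), LettersLT m e cJ ∧ (∀ x ≤ q, pos x ≤ e) ∧
      ∀ x < q, b x < m → pos (x + 1) = pos x + 1 ∧ cJ (pos x) = b x := by
  rcases Nat.eq_zero_or_pos m with rfl | hm
  · exact ⟨0, 0, 0, fun _ h => absurd h (Nat.not_lt_zero _), fun _ _ => le_rfl,
      fun _ _ h => absurd h (Nat.not_lt_zero _)⟩
  · refine ⟨q, fun i => min (b i) (m - 1), id, fun i _ => (min_le_right _ _).trans_lt (by omega),
      fun _ hx => hx, fun x _ hbx => ⟨rfl, min_eq_left (Nat.le_sub_one_of_lt hbx)⟩⟩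

theorem wordRamsey_zero (p : ℕ) : WordRamsey 0 p := by
  intro κ _ a q b ha hb
  obtain rfl : p = 0 := Nat.eq_zero_of_not_pos fun h => Nat.not_lt_zero _ (ha 0 h)
  obtain rfl : q = 0 := Nat.eq_zero_of_not_pos fun h => Nat.not_lt_zero _ (hb 0 h)
  refine ⟨0, b, hb, fun χ hχ => ⟨id, Emb.id, χ id, fun g hg => hχ fun i hi => ?_⟩⟩
  obtain rfl : i = 0 := Nat.le_zero.1 hi
  exact Nat.le_zero.1 hg.le_len

theorem wordRamsey_succ {m : ℕ} (hm : ∀ p, WordRamsey m p) (p : ℕ)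
    (hlt : ∀ p' < p, WordRamsey (m + 1) p') : WordRamsey (m + 1) p := by
  intro κ _ a q b ha hb
  obtain ⟨e, cJ, pos, hJ, hpos, hstep⟩ := exists_segmentWord hb
  obtain ⟨n, c, hc, hblock⟩ :=
    exists_arrowsByBlock hm hlt κ ha hJ (Fintype.card κ * Nat.count (b · = m) q)
  refine ⟨n, c, hc, hblock.arrows fun jj hjj hjjM =>
    ⟨_, emb_repeatSep hb hJ hpos hstep hjj hjjM, fun x hx => ⟨_, Nat.count_monotone _ hx, ?_⟩⟩⟩
  rw [add_comm, Nat.add_mul_div_right _ _ (Nat.succ_pos e),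
    Nat.div_eq_of_lt (Nat.lt_succ_of_le (hpos x hx)), zero_add]

theorem wordRamsey (m p : ℕ) : WordRamsey m p := by
  induction m generalizing p with
  | zero => exact wordRamsey_zero p
  | succ m ih =>
    induction p using Nat.strong_induction_on with
    | _ p hp => exact wordRamsey_succ ih p hp

end GapWord

theorem exists_strictMono_enum {S : Set ℝ} (hS : S.Finite) (hpos : ∀ r ∈ S, 0 < r) :
    ∃ (m : ℕ) (v : ℕ → ℝ), StrictMono v ∧ 0 < v 0 ∧ S ⊆ Set.range v ∧ ∀ t, v t ∈ S → t < m := by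
  set s := hS.toFinset
  set e := s.orderEmbOfFin rfl
  have hle : ∀ r ∈ S, r ≤ ∑ x ∈ s, x := fun r hr =>
    Finset.single_le_sum (fun x hx => (hpos x (hS.mem_toFinset.1 hx)).le) (hS.mem_toFinset.2 hr)
  have he : ∀ i, e i ∈ S := fun i => hS.mem_toFinset.1 (s.orderEmbOfFin_mem rfl i)
  -- beyond the `#s` values enumerating `S`, continue above every element of `S`
  let v : ℕ → ℝ := fun t => if h : t < s.card then e ⟨t, h⟩ else ∑ x ∈ s, x + t + 1
  have hv_lt : ∀ t (h : t < s.card), v t = e ⟨t, h⟩ := fun t h => dif_pos h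
  have hv_ge : ∀ t, s.card ≤ t → v t = ∑ x ∈ s, x + t + 1 := fun t h => dif_neg (by omega)
  refine ⟨s.card, v, strictMono_nat_of_lt_succ fun t => ?_, ?_, fun r hr => ?_, fun t ht => ?_⟩
  · rcases lt_or_ge (t + 1) s.card with h | h
    · rw [hv_lt t (by omega), hv_lt (t + 1) h]
      exact e.strictMono (Fin.mk_lt_mk.2 (Nat.lt_succ_self t))
    · rw [hv_ge (t + 1) h]
      rcases lt_or_ge t s.card with h' | h'
      · rw [hv_lt t h']; have := hle _ (he ⟨t, h'⟩); push_cast; linarith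
      · rw [hv_ge t h']; push_cast; linarith
  · rcases Nat.eq_zero_or_pos s.card with h | h
    · rw [hv_ge 0 h.le]; have := Finset.sum_nonneg fun x hx => (hpos x (hS.mem_toFinset.1 hx)).le
      push_cast; linarith
    · rw [hv_lt 0 h]; exact hpos _ (he _)
  · obtain ⟨i, hi⟩ : r ∈ Set.range e := by
      rw [Finset.range_orderEmbOfFin]; exact hS.mem_toFinset.2 hr
    exact ⟨i, (hv_lt i i.2).trans hi⟩
  · by_contra! h
    have := hle _ ht
    rw [hv_ge t h] at this
    have : (0 : ℝ) ≤ t := t.cast_nonneg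
    linarith

namespace ConvOrdUltra

open GapWord (gapMax)

variable {κ : Type} {X Y Z : ConvOrdUltra}

theorem dist_nonneg (Z : ConvOrdUltra) (x y : Z.U) : 0 ≤ Z.dist x y := by
  simpa [Z.dist_self, Z.dist_comm y x] using Z.ultra x y x

theorem dist_eq_max_of_lt_of_lt {x y z : Z.U} (hxy : Z.lt x y) (hyz : Z.lt y z) :
    Z.dist x z = max (Z.dist x y) (Z.dist y z) := by
  have hy : Z.dist x y ≤ Z.dist x z :=
    Z.convex x _ x z y (by rw [Z.dist_self]; exact Z.dist_nonneg x z) le_rfl hxy hyz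
  refine le_antisymm (Z.ultra x y z) (max_le hy ?_)
  calc Z.dist y z ≤ max (Z.dist y x) (Z.dist x z) := Z.ultra y x z
    _ = Z.dist x z := by rw [Z.dist_comm y x, max_eq_right hy]

theorem Emb.of_lt {f : X.U → Y.U} (hlt : ∀ a b, X.lt a b → Y.lt (f a) (f b))
    (hdist : ∀ a b, X.lt a b → Y.dist (f a) (f b) = X.dist a b) : Emb X Y f := by
  refine ⟨fun a b hab => ?_, fun a b => ?_, hlt⟩
  · rcases X.lt_total a b with h | h | h
    · exact absurd (hab ▸ hlt a b h) (Y.lt_irrefl _)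
    · exact h
    · exact absurd (hab ▸ hlt b a h) (Y.lt_irrefl _)
  · rcases X.lt_total a b with h | rfl | h
    · exact hdist a b h
    · rw [X.dist_self, Y.dist_self]
    · rw [X.dist_comm, Y.dist_comm, hdist b a h]

theorem Emb.comp {f : X.U → Y.U} {g : Y.U → Z.U} (hf : Emb X Y f) (hg : Emb Y Z g) :
    Emb X Z (g ∘ f) :=
  ⟨hg.1.comp hf.1, fun a b => (hg.2.1 _ _).trans (hf.2.1 a b),
    fun a b h => hg.2.2 _ _ (hf.2.2 a b h)⟩

theorem Emb.symm (e : X.U ≃ Y.U) (he : Emb X Y e) : Emb Y X e.symm := by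
  refine ⟨e.symm.injective, fun a b => by simpa using (he.2.1 (e.symm a) (e.symm b)).symm,
    fun a b hab => ?_⟩
  rcases X.lt_total (e.symm a) (e.symm b) with h | h | h
  · exact h
  · exact absurd (e.symm.injective h ▸ hab) (Y.lt_irrefl a)
  · have := he.2.2 _ _ h
    rw [e.apply_symm_apply, e.apply_symm_apply] at this
    exact absurd (Y.lt_trans _ _ _ hab this) (Y.lt_irrefl a)

def distSet (Z : ConvOrdUltra) : Set ℝ := {r | ∃ x y, x ≠ y ∧ Z.dist x y = r}

theorem distSet_finite (Z : ConvOrdUltra) : Z.distSet.Finite := by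
  have := Z.finite
  exact (Set.finite_range fun xy : Z.U × Z.U => Z.dist xy.1 xy.2).subset
    fun _ ⟨x, y, _, h⟩ => ⟨(x, y), h⟩

theorem pos_of_mem_distSet {r : ℝ} (hr : r ∈ Z.distSet) : 0 < r := by
  obtain ⟨x, y, hxy, rfl⟩ := hr
  exact (Z.dist_nonneg x y).lt_of_ne fun h => hxy (Z.eq_of_dist_eq_zero x y h.symm)

theorem Emb.distSet_subset {X Y : ConvOrdUltra} {f : X.U → Y.U} (hf : Emb X Y f) :
    X.distSet ⊆ Y.distSet :=
  fun _ ⟨x, y, hxy, h⟩ => ⟨f x, f y, hf.1.ne hxy, (hf.2.1 x y).trans h⟩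

/-- The partition arrow `W ⟶ Y ^ X` for colourings with values in `κ`. -/
def Arrows (κ : Type) (W Y X : ConvOrdUltra) : Prop :=
  ∀ χ : (X.U → W.U) → κ, ∃ w, Emb Y W w ∧ ∃ i : κ, ∀ g, Emb X Y g → χ (w ∘ g) = i

theorem Arrows.of_equiv {W X' Y' : ConvOrdUltra} (h : Arrows κ W Y' X') (eX : X'.U ≃ X.U)
    (heX : Emb X' X eX) {eY : Y.U → Y'.U} (heY : Emb Y Y' eY) : Arrows κ W Y X := by
  intro χ
  obtain ⟨w, hw, i, hi⟩ := h fun f => χ (f ∘ eX.symm)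
  refine ⟨w ∘ eY, heY.comp hw, i, fun g hg => ?_⟩
  rw [← hi _ (heX.comp (hg.comp heY))]
  congr 1
  funext x
  simp

theorem arrows_of_isEmpty [IsEmpty X.U] : Arrows κ Y Y X :=
  fun χ => ⟨id, ⟨Function.injective_id, fun _ _ => rfl, fun _ _ h => h⟩, χ isEmptyElim,
    fun _ _ => congrArg χ (funext isEmptyElim)⟩

def wordDist (n : ℕ) (c : ℕ → ℕ) (v : ℕ → ℝ) (i j : Fin (n + 1)) : ℝ :=
  if i < j then v (gapMax c i j) else if j < i then v (gapMax c j i) else 0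

section wordDist

variable {n : ℕ} {c : ℕ → ℕ} {v : ℕ → ℝ} {i j l : Fin (n + 1)}

theorem wordDist_of_lt (h : i < j) : wordDist n c v i j = v (gapMax c i j) := if_pos h

@[simp]
theorem wordDist_self (i : Fin (n + 1)) : wordDist n c v i i = 0 := by simp [wordDist]

theorem wordDist_comm (i j : Fin (n + 1)) : wordDist n c v i j = wordDist n c v j i := by
  rcases lt_trichotomy i j with h | rfl | h
  · rw [wordDist_of_lt h, wordDist, if_neg h.not_gt, if_pos h]
  · rfl
  · rw [wordDist_of_lt h, wordDist, if_neg h.not_gt, if_pos h]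

theorem wordDist_pos (hv : StrictMono v) (hv0 : 0 < v 0) (h : i ≠ j) : 0 < wordDist n c v i j := by
  rcases h.lt_or_gt with h | h
  · rw [wordDist_of_lt h]; exact hv0.trans_le (hv.monotone (Nat.zero_le _))
  · rw [wordDist_comm, wordDist_of_lt h]; exact hv0.trans_le (hv.monotone (Nat.zero_le _))

theorem wordDist_nonneg (hv : StrictMono v) (hv0 : 0 < v 0) (i j : Fin (n + 1)) :
    0 ≤ wordDist n c v i j := by
  rcases eq_or_ne i j with rfl | h
  · simp
  · exact (wordDist_pos hv hv0 h).le

theorem wordDist_le_wordDist (hv : StrictMono v) {i' j' : Fin (n + 1)} (hij : i < j)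
    (hi : i' ≤ i) (hj : j ≤ j') :
    wordDist n c v i j ≤ wordDist n c v i' j' := by
  rw [wordDist_of_lt hij, wordDist_of_lt ((hi.trans_lt hij).trans_le hj)]
  exact hv.monotone (GapWord.gapMax_mono hi hj)

theorem wordDist_eq_max (hv : StrictMono v) (hij : i < j) (hjl : j < l) :
    wordDist n c v i l = max (wordDist n c v i j) (wordDist n c v j l) := by
  rw [wordDist_of_lt (hij.trans hjl), wordDist_of_lt hij, wordDist_of_lt hjl,
    GapWord.gapMax_split (Fin.le_iff_val_le_val.1 hij.le) (Fin.le_iff_val_le_val.1 hjl.le),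
    hv.monotone.map_max]

theorem wordDist_le_max (hv : StrictMono v) (hv0 : 0 < v 0) (i j l : Fin (n + 1)) :
    wordDist n c v i l ≤ max (wordDist n c v i j) (wordDist n c v j l) := by
  wlog hil : i < l generalizing i l
  · rcases (not_lt.1 hil).lt_or_eq with hli | rfl
    · rw [wordDist_comm i l, wordDist_comm i j, wordDist_comm j l, max_comm]
      exact this l i hli
    · rw [wordDist_self]; exact le_max_of_le_left (wordDist_nonneg hv hv0 _ _)
  rcases lt_trichotomy j i with hj | rfl | hj
  · exact le_max_of_le_right (wordDist_le_wordDist hv hil hj.le le_rfl)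
  · simp
  rcases lt_trichotomy j l with hjl | rfl | hjl
  · exact (wordDist_eq_max hv hj hjl).le
  · simp
  · exact le_max_of_le_left (wordDist_le_wordDist hv hil le_rfl hjl.le)

end wordDist

def ofWord (n : ℕ) (c : ℕ → ℕ) (v : ℕ → ℝ) (hv : StrictMono v) (hv0 : 0 < v 0) :
    ConvOrdUltra where
  U := Fin (n + 1)
  finite := inferInstance
  dist := wordDist n c v
  dist_self := wordDist_self
  eq_of_dist_eq_zero i j h := by_contra fun hij => (wordDist_pos hv hv0 hij).ne' h
  dist_comm := wordDist_comm
  ultra := wordDist_le_max hv hv0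
  lt := (· < ·)
  lt_irrefl := _root_.lt_irrefl
  lt_trans _ _ _ := _root_.lt_trans
  lt_total := lt_trichotomy
  convex u r x y z hux huy hxz hzy := by
    rcases lt_trichotomy u z with h | rfl | h
    · exact (wordDist_le_wordDist hv h le_rfl hzy.le).trans huy
    · simpa using (wordDist_nonneg hv hv0 u x).trans hux
    · rw [wordDist_comm] at hux ⊢
      exact (wordDist_le_wordDist hv h hxz.le le_rfl).trans hux

section ofWord

open Fin.NatCast

variable {v : ℕ → ℝ} {hv : StrictMono v} {hv0 : 0 < v 0} {p q n : ℕ} {a b c : ℕ → ℕ}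

theorem emb_ofWord {φ : ℕ → ℕ} (hφ : GapWord.Emb p a n c φ) :
    Emb (ofWord p a v hv hv0) (ofWord n c v hv hv0)
      (fun i : Fin (p + 1) => (φ i : Fin (n + 1))) := by
  have hval : ∀ i : Fin (p + 1), ((φ i : Fin (n + 1)) : ℕ) = φ i := fun i =>
    Fin.val_cast_of_lt (Nat.lt_succ_of_le (hφ.le_len_of_le (Nat.lt_succ_iff.1 i.2)))
  have hlt : ∀ i j : Fin (p + 1), i < j → (φ i : Fin (n + 1)) < φ j := fun i j hij => by
    rw [Fin.lt_def, hval, hval]; exact hφ.lt_of_lt hij (Nat.lt_succ_iff.1 j.2)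
  refine Emb.of_lt hlt fun (i j : Fin (p + 1)) hij => ?_
  change wordDist n c v _ _ = wordDist p a v i j
  rw [wordDist_of_lt (hlt i j hij), wordDist_of_lt hij, hval, hval,
    hφ.gapMax_eq hij.le (Nat.lt_succ_iff.1 j.2)]

theorem Emb.gapWordEmb {f : Fin (p + 1) → Fin (n + 1)}
    (hf : Emb (ofWord p a v hv hv0) (ofWord n c v hv hv0) f) :
    GapWord.Emb p a n c (fun i => f (i : Fin (p + 1))) := by
  have hsucc : ∀ i < p, (i : Fin (p + 1)) < ((i + 1 : ℕ) : Fin (p + 1)) := fun i hi => by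
    rw [Fin.lt_def, Fin.val_cast_of_lt (by omega), Fin.val_cast_of_lt (by omega)]; omega
  refine ⟨Nat.lt_succ_iff.1 (f _).2, fun i hi => hf.2.2 _ _ (hsucc i hi),
    fun i hi => hv.injective ?_⟩
  have hdist : wordDist n c v _ _ = wordDist p a v _ _ := hf.2.1 (i : Fin (p + 1))
    ((i + 1 : ℕ) : Fin (p + 1))
  rw [wordDist_of_lt (hf.2.2 _ _ (hsucc i hi)), wordDist_of_lt (hsucc i hi),
    Fin.val_cast_of_lt (by omega), Fin.val_cast_of_lt (by omega), GapWord.gapMax_add_one] at hdist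
  exact hdist

theorem arrows_ofWord (h : GapWord.Arrows κ n c q b p a) :
    Arrows κ (ofWord n c v hv hv0) (ofWord q b v hv hv0) (ofWord p a v hv hv0) := by
  intro χ
  obtain ⟨ψ, hψ, i, hi⟩ := h (fun φ => χ fun x : Fin (p + 1) => (φ x : Fin (n + 1)))
    fun φ φ' hφφ' => congrArg χ (funext fun x => by
      rw [hφφ' x (Set.mem_Iic.2 (Nat.lt_succ_iff.1 x.2))])
  refine ⟨_, emb_ofWord hψ, i, fun g hg => (Eq.trans ?_ (hi _ hg.gapWordEmb))⟩
  congr 1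
  funext (x : Fin (p + 1))
  simp only [Function.comp_apply, Fin.cast_val_eq_self]
  rfl

end ofWord

theorem exists_enum (Z : ConvOrdUltra) [Nonempty Z.U] :
    ∃ (N : ℕ) (e : Fin (N + 1) ≃ Z.U), ∀ i j, i < j → Z.lt (e i) (e j) := by
  classical
  have : IsStrictTotalOrder Z.U Z.lt :=
    { trichotomous := fun a b h1 h2 => ((Z.lt_total a b).resolve_left h1).resolve_right h2
      irrefl := Z.lt_irrefl
      trans := Z.lt_trans }
  let _ : LinearOrder Z.U := linearOrderOfSTO Z.lt
  have := Z.finite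
  let _ : Fintype Z.U := Fintype.ofFinite Z.U
  obtain ⟨N, hN⟩ := Nat.exists_eq_add_one_of_ne_zero (Fintype.card_ne_zero (α := Z.U))
  exact ⟨N, (Fintype.orderIsoFinOfCardEq Z.U hN).toEquiv,
    fun i j hij => (Fintype.orderIsoFinOfCardEq Z.U hN).strictMono hij⟩

section wordLetters

open Fin.NatCast

/-- The letter of the gap after `e i` is the index of `d(e i, e (i + 1))` in `v`, a junk value
unless that distance is in the range of `v`. -/
noncomputable def wordLetters (Z : ConvOrdUltra) {N : ℕ} (e : Fin (N + 1) → Z.U) (v : ℕ → ℝ)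
    (i : ℕ) : ℕ :=
  Function.invFun v (Z.dist (e i) (e (i + 1 : ℕ)))

variable {N m : ℕ} {e : Fin (N + 1) → Z.U} {v : ℕ → ℝ}

theorem enum_natCast_lt (he : ∀ i j, i < j → Z.lt (e i) (e j)) {i j : ℕ} (hij : i < j)
    (hj : j ≤ N) : Z.lt (e i) (e j) :=
  he _ _ (by
    rw [Fin.lt_def, Fin.val_cast_of_lt (by omega), Fin.val_cast_of_lt (by omega)]
    exact hij)

theorem dist_enum_succ_mem_distSet (he : ∀ i j, i < j → Z.lt (e i) (e j)) {i : ℕ} (hi : i < N) :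
    Z.dist (e i) (e (i + 1 : ℕ)) ∈ Z.distSet := by
  refine ⟨_, _, fun h => Z.lt_irrefl (e i) ?_, rfl⟩
  have := enum_natCast_lt he (Nat.lt_succ_self i) hi
  rwa [← h] at this

theorem dist_wordLetters (he : ∀ i j, i < j → Z.lt (e i) (e j)) (hZv : Z.distSet ⊆ Set.range v)
    {i : ℕ} (hi : i < N) : v (wordLetters Z e v i) = Z.dist (e i) (e (i + 1 : ℕ)) :=
  Function.invFun_eq (hZv (dist_enum_succ_mem_distSet he hi))

theorem dist_enum_eq_gapMax (he : ∀ i j, i < j → Z.lt (e i) (e j)) (hv : StrictMono v)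
    (hZv : Z.distSet ⊆ Set.range v) {i j : ℕ} (hij : i < j) (hj : j ≤ N) :
    Z.dist (e i) (e j) = v (gapMax (wordLetters Z e v) i j) := by
  induction j, hij using Nat.le_induction with
  | base => rw [GapWord.gapMax_add_one, dist_wordLetters he hZv (by omega)]
  | succ j hij ih =>
    rw [dist_eq_max_of_lt_of_lt (enum_natCast_lt he hij (by omega))
        (enum_natCast_lt he (Nat.lt_succ_self j) hj), ih (by omega),
      ← dist_wordLetters he hZv (by omega), ← hv.monotone.map_max,
      GapWord.gapMax_split (by omega : i ≤ j) (Nat.le_succ j), GapWord.gapMax_add_one]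

theorem lettersLT_wordLetters (he : ∀ i j, i < j → Z.lt (e i) (e j)) (hZv : Z.distSet ⊆ Set.range v)
    (hvZ : ∀ t, v t ∈ Z.distSet → t < m) : GapWord.LettersLT m N (wordLetters Z e v) :=
  fun _ hi => hvZ _ (dist_wordLetters he hZv hi ▸ dist_enum_succ_mem_distSet he hi)

theorem emb_ofWord_wordLetters (he : ∀ i j, i < j → Z.lt (e i) (e j)) (hv : StrictMono v)
    (hv0 : 0 < v 0) (hZv : Z.distSet ⊆ Set.range v) :
    Emb (ofWord N (wordLetters Z e v) v hv hv0) Z e := by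
  refine Emb.of_lt he fun (i j : Fin (N + 1)) hij => ?_
  have := dist_enum_eq_gapMax he hv hZv (Fin.lt_def.1 hij) (Nat.lt_succ_iff.1 j.2)
  rw [Fin.cast_val_eq_self, Fin.cast_val_eq_self] at this
  exact this.trans (wordDist_of_lt hij).symm

end wordLetters

end ConvOrdUltra

theorem convexlyOrderedUltrametric_ramsey_general (k : ℕ) (X Y : ConvOrdUltra)
    (hXY : ∃ f, ConvOrdUltra.Emb X Y f) :
    ∃ W : ConvOrdUltra,
      ∀ χ : (X.U → W.U) → Fin k,
        ∃ w, ConvOrdUltra.Emb Y W w ∧ ∃ i : Fin k,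
          ∀ g, ConvOrdUltra.Emb X Y g → χ (w ∘ g) = i := by
  obtain ⟨f, hf⟩ := hXY
  rcases isEmpty_or_nonempty X.U with hX | hX
  · exact ⟨Y, ConvOrdUltra.arrows_of_isEmpty⟩
  have : Nonempty Y.U := hX.map f
  obtain ⟨m, v, hv, hv0, hYv, hvY⟩ :=
    exists_strictMono_enum Y.distSet_finite fun _ => ConvOrdUltra.pos_of_mem_distSet
  obtain ⟨N, eX, heX⟩ := X.exists_enum
  obtain ⟨Q, eY, heY⟩ := Y.exists_enum
  have hXv := hf.distSet_subset.trans hYv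
  obtain ⟨n, c, -, harr⟩ := GapWord.wordRamsey m N (Fin k) _ Q _
    (ConvOrdUltra.lettersLT_wordLetters heX hXv fun t ht => hvY t (hf.distSet_subset ht))
    (ConvOrdUltra.lettersLT_wordLetters heY hYv hvY)
  exact ⟨.ofWord n c v hv hv0, (ConvOrdUltra.arrows_ofWord harr).of_equiv eX
    (ConvOrdUltra.emb_ofWord_wordLetters heX hv hv0 hXv)
    ((ConvOrdUltra.emb_ofWord_wordLetters heY hv hv0 hYv).symm eY)⟩

/-- The class of all finite convexly ordered ultrametric spaces has the Ramsey property. -/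
theorem convexlyOrderedUltrametric_ramsey (k : ℕ) (hk : 2 ≤ k) (X Y : ConvOrdUltra)
    (hXY : ∃ f, ConvOrdUltra.Emb X Y f) :
    ∃ W : ConvOrdUltra,
      ∀ χ : (X.U → W.U) → Fin k,
        ∃ w, ConvOrdUltra.Emb Y W w ∧ ∃ i : Fin k,
          ∀ g, ConvOrdUltra.Emb X Y g → χ (w ∘ g) = i :=
  convexlyOrderedUltrametric_ramsey_general k X Y hXY
end

section
/- Let S = {0 = s_0 < s_1 < … < s_k} be a finite set of nonnegative reals and let (A, ⊑, ≺) be a finite linearly ordered poset. On the set A^k of tuples (a_0, a_1, …, a_{k-1}) with entries in A, define d(ā, b̄) = s_j where j = min{p ∈ {0, 1, …, k-1} : a_i = b_i for all i ≥ p} (with min ∅ = k), and define ā ≺_alex b̄ iff there exists j with a_j ≺ b_j and a_i = b_i for all i > j. Then (A^k, d, ≺_alex) is a finite convexly ordered ultrametric space all of whose distances lie in S. -/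
/-- `dIdx a b` is the least `p` such that `a i = b i` for all `i ≥ p`
(for tuples `a b : Fin k → A`); it equals `k` when no `p < k` works. -/
noncomputable def dIdx {A : Type} {k : ℕ} (a b : Fin k → A) : ℕ :=
  sInf {p : ℕ | ∀ i : Fin k, p ≤ (i : ℕ) → a i = b i}

theorem dIdx_le {A : Type} {k : ℕ} (a b : Fin k → A) : dIdx a b ≤ k :=
  Nat.sInf_le fun i hi => absurd hi (Nat.not_le.mpr i.isLt)

/-- The ultrametric on tuples: `d(ā, b̄) = s_j` where
`j = min{p : a_i = b_i for all i ≥ p}` (with `min ∅ = k`). -/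
noncomputable def dUlt {A : Type} {k : ℕ} (s : Fin (k + 1) → ℝ) (a b : Fin k → A) : ℝ :=
  s ⟨dIdx a b, Nat.lt_succ_of_le (dIdx_le a b)⟩

/-- The anti-lexicographic order on tuples induced by a strict order `lt` on `A`:
`ā ≺_alex b̄` iff there is a `j` with `a j ≺ b j` and `a i = b i` for all `i > j`. -/
def AltLex {A : Type} (lt : A → A → Prop) {k : ℕ} (a b : Fin k → A) : Prop :=
  ∃ j : Fin k, lt (a j) (b j) ∧ ∀ i : Fin k, j < i → a i = b i

lemma dIdx_spec {A : Type} {k : ℕ} (a b : Fin k → A) :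
    ∀ i : Fin k, dIdx a b ≤ (i : ℕ) → a i = b i := by
  have hne : {p : ℕ | ∀ i : Fin k, p ≤ (i : ℕ) → a i = b i}.Nonempty :=
    ⟨k, fun i hi => absurd hi (Nat.not_le.mpr i.isLt)⟩
  exact Nat.sInf_mem hne

lemma dIdx_le_of {A : Type} {k : ℕ} {a b : Fin k → A} {p : ℕ}
    (h : ∀ i : Fin k, p ≤ (i : ℕ) → a i = b i) : dIdx a b ≤ p :=
  Nat.sInf_le h

lemma dIdx_symm {A : Type} {k : ℕ} (a b : Fin k → A) : dIdx a b = dIdx b a :=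
  le_antisymm (dIdx_le_of fun i hi => (dIdx_spec b a i hi).symm)
    (dIdx_le_of fun i hi => (dIdx_spec a b i hi).symm)

lemma dUlt_mono {A : Type} {k : ℕ} {s : Fin (k + 1) → ℝ} (hs : StrictMono s)
    {a b c d : Fin k → A} (h : dIdx a b ≤ dIdx c d) : dUlt s a b ≤ dUlt s c d :=
  hs.monotone (Fin.mk_le_mk.mpr h)

/-- If `a ≺_alex b`, they differ at `i`, and agree strictly above `i`, then `lt (a i) (b i)`. -/
lemma altLex_at {A : Type} {k : ℕ} {lt : A → A → Prop} (lt_irrefl : ∀ a, ¬ lt a a)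
    {a b : Fin k → A} (h : AltLex lt a b) {i : Fin k}
    (hne : a i ≠ b i) (htop : ∀ i', i < i' → a i' = b i') : lt (a i) (b i) := by
  obtain ⟨j, hj, hja⟩ := h
  rcases lt_trichotomy j i with h1 | h1 | h1
  · exact absurd (hja i h1) hne
  · exact h1 ▸ hj
  · exact absurd (htop j h1) fun e => lt_irrefl _ (e ▸ hj)

/-- Let `S = {0 = s_0 < s_1 < … < s_k}` be a finite set of nonnegative reals and let
`(A, ⊑, ≺)` be a finite linearly ordered poset.  Then `(A^k, d, ≺_alex)`, with
`d(ā, b̄) = s_j` for `j = min{p : a_i = b_i for all i ≥ p}` (`min ∅ = k`), is a finite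
convexly ordered ultrametric space all of whose distances lie in `S`. -/
theorem powerPoset_is_convOrdUltra
    (k : ℕ) (s : Fin (k + 1) → ℝ) (hs0 : s 0 = 0) (hs : StrictMono s)
    (A : Type) (hA : Finite A)
    (le : A → A → Prop)
    (le_refl : ∀ a, le a a)
    (le_antisymm : ∀ a b, le a b → le b a → a = b)
    (le_trans : ∀ a b c, le a b → le b c → le a c)
    (lt : A → A → Prop)
    (lt_irrefl : ∀ a, ¬ lt a a)
    (lt_trans : ∀ a b c, lt a b → lt b c → lt a c)
    (lt_total : ∀ a b, lt a b ∨ a = b ∨ lt b a)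
    (lt_extends : ∀ a b, le a b → a ≠ b → lt a b) :
    -- d is a metric
    (∀ a : Fin k → A, dUlt s a a = 0) ∧
    (∀ a b : Fin k → A, dUlt s a b = 0 → a = b) ∧
    (∀ a b : Fin k → A, dUlt s a b = dUlt s b a) ∧
    -- d is an ultrametric
    (∀ a b c : Fin k → A, dUlt s a c ≤ max (dUlt s a b) (dUlt s b c)) ∧
    -- ≺_alex is a strict linear order
    (∀ a : Fin k → A, ¬ AltLex lt a a) ∧
    (∀ a b c : Fin k → A, AltLex lt a b → AltLex lt b c → AltLex lt a c) ∧
    (∀ a b : Fin k → A, AltLex lt a b ∨ a = b ∨ AltLex lt b a) ∧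
    -- every closed ball is convex with respect to ≺_alex
    (∀ (u : Fin k → A) (r : ℝ) (x y z : Fin k → A),
      dUlt s u x ≤ r → dUlt s u y ≤ r → AltLex lt x z → AltLex lt z y → dUlt s u z ≤ r) ∧
    -- all distances lie in S
    (∀ a b : Fin k → A, dUlt s a b ∈ Set.range s) := by
  classical
  have hzero : ∀ a : Fin k → A, dUlt s a a = 0 := by
    intro a
    have h0 : dIdx a a = 0 := Nat.le_zero.mp (dIdx_le_of fun i _ => rfl)
    have : (⟨dIdx a a, Nat.lt_succ_of_le (dIdx_le a a)⟩ : Fin (k + 1)) = 0 := by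
      ext; simp [h0]
    simpa [dUlt, this] using hs0
  refine ⟨hzero, ?_, ?_, ?_, ?_, ?_, ?_, ?_, ?_⟩
  · -- eq of indiscernibles
    intro a b h
    have h0 : (⟨dIdx a b, Nat.lt_succ_of_le (dIdx_le a b)⟩ : Fin (k + 1)) = 0 :=
      hs.injective (by simpa [dUlt, hs0] using h)
    have hz : dIdx a b = 0 := by simpa [Fin.ext_iff] using h0
    funext i
    exact dIdx_spec a b i (by simp [hz])
  · -- symmetry
    intro a b
    simp [dUlt, dIdx_symm a b]
  · -- ultrametric inequality
    intro a b c
    rcases le_total (dIdx a b) (dIdx b c) with h | h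
    · refine le_max_of_le_right (dUlt_mono hs ?_)
      exact dIdx_le_of fun i hi =>
        (dIdx_spec a b i (h.trans hi)).trans (dIdx_spec b c i hi)
    · refine le_max_of_le_left (dUlt_mono hs ?_)
      exact dIdx_le_of fun i hi =>
        (dIdx_spec a b i hi).trans (dIdx_spec b c i (h.trans hi))
  · -- irreflexivity
    intro a ⟨j, hj, _⟩
    exact lt_irrefl _ hj
  · -- transitivity
    rintro a b c ⟨j1, hj1, ha1⟩ ⟨j2, hj2, ha2⟩
    rcases lt_trichotomy j1 j2 with h | h | h
    · exact ⟨j2, (ha1 j2 h) ▸ hj2, fun i hi => (ha1 i (h.trans hi)).trans (ha2 i hi)⟩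
    · subst h
      exact ⟨j1, lt_trans _ _ _ hj1 hj2, fun i hi => (ha1 i hi).trans (ha2 i hi)⟩
    · exact ⟨j1, (ha2 j1 h) ▸ hj1, fun i hi => (ha1 i hi).trans (ha2 i (h.trans hi))⟩
  · -- totality
    intro a b
    by_cases hab : a = b
    · exact Or.inr (Or.inl hab)
    · have hne : ∃ i : Fin k, a i ≠ b i := by
        by_contra h
        push_neg at h
        exact hab (funext h)
      obtain ⟨i0, hi0⟩ := hne
      set D : Finset (Fin k) := Finset.univ.filter (fun i => a i ≠ b i) with hD
      have hDne : D.Nonempty := ⟨i0, by simp [hD, hi0]⟩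
      set j := D.max' hDne with hj
      have hjD : j ∈ D := D.max'_mem hDne
      have hjne : a j ≠ b j := by simpa [hD] using hjD
      have htop : ∀ i : Fin k, j < i → a i = b i := by
        intro i hi
        by_contra hne'
        exact absurd (D.le_max' i (by simp [hD, hne'])) (not_le.mpr hi)
      rcases lt_total (a j) (b j) with h | h | h
      · exact Or.inl ⟨j, h, htop⟩
      · exact absurd h hjne
      · exact Or.inr (Or.inr ⟨j, h, fun i hi => (htop i hi).symm⟩)
  · -- convexity of balls
    intro u r x y z hx hy hxz hzy
    set m := max (dIdx u x) (dIdx u y) with hm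
    have hz : dIdx u z ≤ m := by
      refine dIdx_le_of ?_
      intro i hi
      by_contra hne0
      -- the set of indices where u and z differ
      set D : Finset (Fin k) := Finset.univ.filter (fun i => u i ≠ z i) with hD
      have hDne : D.Nonempty := ⟨i, by simp [hD, hne0]⟩
      set j := D.max' hDne with hj
      have hjm : m ≤ (j : ℕ) := hi.trans (by
        exact_mod_cast D.le_max' i (by simp [hD, hne0]))
      have hjne : u j ≠ z j := by simpa [hD] using D.max'_mem hDne
      have htopz : ∀ i' : Fin k, j < i' → u i' = z i' := by
        intro i' hi'
        by_contra hne'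
        exact absurd (D.le_max' i' (by simp [hD, hne'])) (not_le.mpr hi')
      have hux : ∀ i' : Fin k, (j : ℕ) ≤ i' → u i' = x i' := fun i' h' =>
        dIdx_spec u x i' (((le_max_left _ _).trans hjm).trans h')
      have huy : ∀ i' : Fin k, (j : ℕ) ≤ i' → u i' = y i' := fun i' h' =>
        dIdx_spec u y i' (((le_max_right _ _).trans hjm).trans h')
      have h1 : lt (x j) (z j) := by
        refine altLex_at lt_irrefl hxz ?_ ?_
        · exact fun e => hjne ((hux j le_rfl).trans e)
        · intro i' hi'
          exact ((hux i' (le_of_lt hi')).symm).trans (htopz i' hi')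
      have h2 : lt (z j) (y j) := by
        refine altLex_at lt_irrefl hzy ?_ ?_
        · exact fun e => hjne ((e ▸ huy j le_rfl) : u j = z j).symm.symm
        · intro i' hi'
          exact (htopz i' hi').symm.trans (huy i' (le_of_lt hi'))
      have h3 : lt (x j) (y j) := lt_trans _ _ _ h1 h2
      have hxy : x j = y j := (hux j le_rfl).symm.trans (huy j le_rfl)
      exact lt_irrefl _ (hxy ▸ h3)
    rcases le_total (dIdx u x) (dIdx u y) with h | h
    · have : dUlt s u z ≤ dUlt s u y :=
        dUlt_mono hs (hz.trans (by simp [hm, h]))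
      exact this.trans hy
    · have : dUlt s u z ≤ dUlt s u x :=
        dUlt_mono hs (hz.trans (by simp [hm, h]))
      exact this.trans hx
  · -- distances in range
    intro a b
    exact ⟨_, rfl⟩
end

section
/- Let A be a subset of ℝ containing 0, closed under addition, with A ≠ {0}. Then for every finite set S = {0 = s_0 < s_1 < … < s_k} ⊆ A there exists a finite tight set T = {0 = t_0 < t_1 < … < t_ℓ} ⊆ A such that S ⊆ T, t_1 = s_1 and t_ℓ = s_k. -/
/-!
Let `P` be the additive monoid generated by `s 1, …, s k` and `T = P ∩ (-∞, s k]`. Every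
nonzero element of `P` is at least `s 1 > 0`, so `T` is finite, `0` and `s 1` are its two
smallest elements, and `T` contains `x + y` whenever `x, y ∈ T` and `x + y ≤ s k`; it lies
in `A` because `A` is an additive monoid. Such a set is tight: if `t i + t j ≤ t ℓ`, then
`t 0 < ⋯ < t i < t i + t 1 < ⋯ < t i + t j` are `i + j + 1` elements of `T`, none
exceeding `t i + t j`, hence `t (i + j) ≤ t i + t j`.
-/

/-- A finite set `T = {0 = t_0 < t_1 < … < t_ℓ}` of nonnegative reals (presented by the
strictly increasing enumeration `t : Fin (ℓ+1) → ℝ`) is tight if `t_{i+j} ≤ t_i + t_j`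
whenever `0 ≤ i ≤ j ≤ i + j ≤ ℓ`. -/
def Tight (l : ℕ) (t : Fin (l + 1) → ℝ) : Prop :=
  ∀ i j : ℕ, i ≤ j → ∀ h : i + j ≤ l,
    t ⟨i + j, by omega⟩ ≤ t ⟨i, by omega⟩ + t ⟨j, by omega⟩

open Set Function

theorem StrictMono.apply_le_of_injective {α : Type*} [LinearOrder α] {n m : ℕ}
    {t : Fin n → α} (ht : StrictMono t) (hm : m < n) {u : Fin (m + 1) → α}
    (hu : Injective u) (hut : ∀ r, u r ∈ range t) {x : α} (hux : ∀ r, u r ≤ x) :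
    t ⟨m, hm⟩ ≤ x := by
  by_contra! hx
  choose v hv using hut
  have hv_inj : Injective v := fun a b hab => hu (by rw [← hv, ← hv, hab])
  have hv_lt : ∀ r, v r ∈ Finset.Iio (⟨m, hm⟩ : Fin n) := fun r =>
    Finset.mem_Iio.2 (ht.lt_iff_lt.1 ((hv r).trans_le (hux r) |>.trans_lt hx))
  have hcard := Finset.card_le_card_of_injOn (s := Finset.univ) v (fun r _ => hv_lt r)
    hv_inj.injOn
  simp at hcard

theorem tight_of_add_mem_range {l : ℕ} {t : Fin (l + 1) → ℝ} (ht : StrictMono t)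
    (h0 : 0 ≤ t 0) (hadd : ∀ a b, t a + t b ≤ t (Fin.last l) → t a + t b ∈ range t) :
    Tight l t := by
  intro i j hij hijl
  have hle : ∀ a b ha hb, a ≤ b → t ⟨a, ha⟩ ≤ t ⟨b, hb⟩ :=
    fun _ _ _ _ hab => ht.monotone (Fin.mk_le_mk.2 hab)
  have hlt : ∀ a b ha hb, a < b → t ⟨a, ha⟩ < t ⟨b, hb⟩ :=
    fun _ _ _ _ hab => ht (Fin.mk_lt_mk.2 hab)
  have h0' : 0 ≤ t ⟨0, by omega⟩ := h0
  by_cases hx : t ⟨i, by omega⟩ + t ⟨j, by omega⟩ ≤ t (Fin.last l)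
  swap
  · exact (ht.monotone (Fin.le_last _)).trans (not_le.1 hx).le
  let u : Fin (i + j + 1) → ℝ := fun r =>
    if (r : ℕ) ≤ i then t ⟨r, by omega⟩ else t ⟨i, by omega⟩ + t ⟨r - i, by omega⟩
  have hu_le : ∀ r, u r ≤ t ⟨i, by omega⟩ + t ⟨j, by omega⟩ := by
    intro r
    simp only [u]
    split_ifs with hr
    · linarith [hle r i (by omega) (by omega) hr, hle 0 j (by omega) (by omega) (by omega)]
    · linarith [hle (r - i) j (by omega) (by omega) (by omega)]
  have hu_mono : StrictMono u := by
    intro a b hab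
    rw [Fin.lt_def] at hab
    simp only [u]
    split_ifs with ha hb hb
    · exact hlt a b _ _ hab
    · linarith [hle a i (by omega) (by omega) ha,
        hlt 0 (b - i) (by omega) (by omega) (by omega)]
    · omega
    · linarith [hlt (a - i) (b - i) (by omega) (by omega) (by omega)]
  have hu_range : ∀ r, u r ∈ range t := by
    intro r
    by_cases hr : (r : ℕ) ≤ i
    · simp only [u, if_pos hr, mem_range_self]
    · have := hu_le r
      simp only [u, if_neg hr] at this ⊢
      exact hadd _ _ (by linarith)
  exact ht.apply_le_of_injective _ hu_mono.injective hu_range hu_le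

namespace AddSubmonoid

theorem eq_zero_or_le_of_mem_closure {α : Type*} [AddCommMonoid α] [PartialOrder α]
    [IsOrderedAddMonoid α] {G : Set α} {c : α} (hc : 0 ≤ c) (hG : ∀ g ∈ G, c ≤ g)
    {x : α} (hx : x ∈ closure G) : x = 0 ∨ c ≤ x := by
  induction hx using closure_induction with
  | mem g hg => exact .inr (hG g hg)
  | zero => exact .inl rfl
  | add x y _ _ hx hy =>
    rcases hx with rfl | hx
    · simpa using hy
    · have hy₀ : 0 ≤ y := by rcases hy with rfl | hy; exacts [le_rfl, hc.trans hy]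
      exact .inr (le_add_of_le_of_nonneg hx hy₀)

theorem finite_closure_range_inter_Iic {ι : Type*} [Finite ι] {g : ι → ℝ}
    (hg : ∀ i, 0 < g i) (M : ℝ) : ((closure (range g) : Set ℝ) ∩ Iic M).Finite := by
  classical
  cases nonempty_fintype ι
  refine ((Set.finite_Iic fun i => ⌈M / g i⌉₊).image fun a => ∑ i, a i • g i).subset ?_
  rintro x ⟨hx, hxM⟩
  obtain ⟨a, rfl⟩ := mem_closure_range_iff_of_fintype.1 hx
  refine ⟨a, fun i => ?_, rfl⟩
  have hterm : a i • g i ≤ M := (Finset.single_le_sum (fun j _ => nsmul_nonneg (hg j).le _)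
    (Finset.mem_univ i)).trans hxM
  rw [nsmul_eq_mul, ← le_div_iff₀ (hg i)] at hterm
  exact Nat.cast_le.1 (hterm.trans (Nat.le_ceil _))

end AddSubmonoid

theorem exists_tight_enumeration (P : AddSubmonoid ℝ) {c M : ℝ} (hc : 0 < c) (hcP : c ∈ P)
    (hMP : M ∈ P) (hcM : c ≤ M) (hgap : ∀ x ∈ P, x = 0 ∨ c ≤ x)
    (hfin : ((P : Set ℝ) ∩ Iic M).Finite) :
    ∃ l : ℕ, ∃ t : Fin (l + 2) → ℝ, t 0 = 0 ∧ StrictMono t ∧ Tight (l + 1) t ∧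
      range t = (P : Set ℝ) ∩ Iic M ∧ t 1 = c ∧ t (Fin.last (l + 1)) = M := by
  have hcard : 1 < hfin.toFinset.card :=
    Finset.one_lt_card.2 ⟨0, by simp [P.zero_mem, hc.le.trans hcM], c, by simp [hcP, hcM],
      hc.ne⟩
  obtain ⟨l, hl⟩ : ∃ l, hfin.toFinset.card = l + 2 := ⟨_, (Nat.sub_add_cancel hcard).symm⟩
  set t := hfin.toFinset.orderEmbOfFin hl
  have hrange : range t = (P : Set ℝ) ∩ Iic M := by simp [t, Finset.range_orderEmbOfFin]
  have ht : StrictMono t := t.strictMono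
  have htP : ∀ a, t a ∈ P ∧ t a ≤ M := fun a => hrange.subset (mem_range_self a)
  have hnonneg : ∀ a, 0 ≤ t a := fun a => by
    rcases hgap _ (htP a).1 with h | h
    exacts [h.ge, hc.le.trans h]
  obtain ⟨a₀, ha₀⟩ : (0 : ℝ) ∈ range t := hrange ▸ ⟨P.zero_mem, hc.le.trans hcM⟩
  obtain ⟨a₁, ha₁⟩ : c ∈ range t := hrange ▸ ⟨hcP, hcM⟩
  obtain ⟨aₘ, haₘ⟩ : M ∈ range t := hrange ▸ ⟨hMP, mem_Iic.2 le_rfl⟩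
  have ht0 : t 0 = 0 := le_antisymm (ha₀ ▸ ht.monotone (Fin.zero_le a₀)) (hnonneg 0)
  have htlast : t (Fin.last (l + 1)) = M :=
    le_antisymm (htP _).2 (haₘ ▸ ht.monotone (Fin.le_last aₘ))
  have ht1 : t 1 = c := by
    have ha₁0 : a₁ ≠ 0 := by rintro rfl; exact hc.ne (ht0 ▸ ha₁)
    have ht1_ne : t 1 ≠ 0 := (ht0 ▸ ht Fin.zero_lt_one).ne'
    exact le_antisymm (ha₁ ▸ ht.monotone (Fin.one_le_of_ne_zero ha₁0))
      ((hgap _ (htP 1).1).resolve_left ht1_ne)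
  have htight : Tight (l + 1) t := tight_of_add_mem_range ht ht0.ge fun a b hab =>
    hrange ▸ ⟨P.add_mem (htP a).1 (htP b).1, htlast ▸ hab⟩
  exact ⟨l, t, ht0, ht, htight, hrange, ht1, htlast⟩

theorem exists_tight_superset_general
    (A : Set ℝ) (hA0 : (0 : ℝ) ∈ A) (hAadd : ∀ x ∈ A, ∀ y ∈ A, x + y ∈ A)
    (k : ℕ) (hk : 1 ≤ k) (s : Fin (k + 1) → ℝ)
    (hs0 : s 0 = 0) (hs : StrictMono s) (hsA : ∀ i, s i ∈ A) :
    ∃ l : ℕ, ∃ t : Fin (l + 2) → ℝ,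
      t 0 = 0 ∧ StrictMono t ∧ Tight (l + 1) t ∧
      (∀ i, t i ∈ A) ∧ Set.range s ⊆ Set.range t ∧
      t 1 = s 1 ∧ t (Fin.last (l + 1)) = s (Fin.last k) := by
  let P := AddSubmonoid.closure (range fun i : Fin k => s i.succ)
  let Asub : AddSubmonoid ℝ :=
    { carrier := A, add_mem' := fun ha hb => hAadd _ ha _ hb, zero_mem' := hA0 }
  have hPA : P ≤ Asub := AddSubmonoid.closure_le.2 (range_subset_iff.2 fun i => hsA i.succ)
  have hsP : ∀ i, s i ∈ P := Fin.cases (hs0 ▸ P.zero_mem)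
    fun i => AddSubmonoid.subset_closure (mem_range_self i)
  have h01 : (0 : Fin (k + 1)) < 1 := by
    rw [Fin.lt_def, Fin.val_one', Nat.mod_eq_of_lt (by omega)]
    exact Nat.zero_lt_one
  have hc : 0 < s 1 := hs0 ▸ hs h01
  have hgen : ∀ i : Fin k, s 1 ≤ s i.succ := fun i =>
    hs.monotone (Fin.one_le_of_ne_zero i.succ_ne_zero)
  obtain ⟨l, t, ht0, ht, htight, hrange, ht1, htlast⟩ :=
    exists_tight_enumeration P hc (hsP 1) (hsP _) (hs.monotone (Fin.le_last 1))
      (fun x hx => AddSubmonoid.eq_zero_or_le_of_mem_closure hc.le (forall_mem_range.2 hgen) hx)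
      (AddSubmonoid.finite_closure_range_inter_Iic (fun i => hc.trans_le (hgen i)) _)
  have htA : ∀ i, t i ∈ A := fun i => hPA (hrange.subset (mem_range_self i)).1
  have hst : range s ⊆ range t := by
    rintro _ ⟨i, rfl⟩
    exact hrange ▸ ⟨hsP i, hs.monotone (Fin.le_last i)⟩
  exact ⟨l, t, ht0, ht, htight, htA, hst, ht1, htlast⟩

/-- Let `A ⊆ ℝ` contain `0`, be closed under addition, and satisfy `A ≠ {0}`.  For every
finite set `S = {0 = s_0 < s_1 < … < s_k} ⊆ A` there is a finite tight set
`T = {0 = t_0 < t_1 < … < t_ℓ} ⊆ A` with `S ⊆ T`, `t_1 = s_1` and `t_ℓ = s_k`. -/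
theorem exists_tight_superset
    (A : Set ℝ) (hA0 : (0 : ℝ) ∈ A) (hAadd : ∀ x ∈ A, ∀ y ∈ A, x + y ∈ A)
    (hAne : A ≠ {0})
    (k : ℕ) (hk : 1 ≤ k) (s : Fin (k + 1) → ℝ)
    (hs0 : s 0 = 0) (hs : StrictMono s) (hsA : ∀ i, s i ∈ A) :
    ∃ l : ℕ, ∃ t : Fin (l + 2) → ℝ,
      t 0 = 0 ∧ StrictMono t ∧ Tight (l + 1) t ∧
      (∀ i, t i ∈ A) ∧ Set.range s ⊆ Set.range t ∧
      t 1 = s 1 ∧ t (Fin.last (l + 1)) = s (Fin.last k) :=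
  exists_tight_superset_general A hA0 hAadd k hk s hs0 hs hsA
end

section
/- Let S = {0 = s_0 < s_1 < … < s_k} be a finite tight set of nonnegative reals and let (A, ⊑, ≺) be a finite linearly ordered poset. On the set A^k of tuples (a_0, a_1, …, a_{k-1}) with entries in A, define d(ā, b̄) = s_j where j = min{p ∈ {0, 1, …, k-1} : for all i ≤ k - 1 - p, a_i ⊑ b_{i+p} and b_i ⊑ a_{i+p}} (with min ∅ = k), and define ā ≺_lex b̄ iff there exists j with a_j ≺ b_j and a_i = b_i for all i < j. Then (A^k, d, ≺_lex) is a finite linearly ordered metric space all of whose distances lie in S. -/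
/-- `dIdxM le a b` is the least `p` such that `a_i ⊑ b_{i+p}` and `b_i ⊑ a_{i+p}` for all
`i ≤ k - 1 - p` (for tuples `a b : Fin k → A`); it equals `k` when no `p < k` works. -/
noncomputable def dIdxM {A : Type} (le : A → A → Prop) {k : ℕ} (a b : Fin k → A) : ℕ :=
  sInf {p : ℕ | ∀ (i : Fin k) (h : (i : ℕ) + p < k),
    le (a i) (b ⟨(i : ℕ) + p, h⟩) ∧ le (b i) (a ⟨(i : ℕ) + p, h⟩)}

theorem dIdxM_le {A : Type} (le : A → A → Prop) {k : ℕ} (a b : Fin k → A) :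
    dIdxM le a b ≤ k :=
  Nat.sInf_le fun _ h => absurd h (by omega)

/-- The metric on tuples: `d(ā, b̄) = s_j` where
`j = min{p : a_i ⊑ b_{i+p} and b_i ⊑ a_{i+p} for all i ≤ k - 1 - p}` (with `min ∅ = k`). -/
noncomputable def dMet {A : Type} (le : A → A → Prop) {k : ℕ} (s : Fin (k + 1) → ℝ)
    (a b : Fin k → A) : ℝ :=
  s ⟨dIdxM le a b, Nat.lt_succ_of_le (dIdxM_le le a b)⟩

/-- The lexicographic order on tuples induced by a strict order `lt` on `A`:
`ā ≺_lex b̄` iff there is a `j` with `a j ≺ b j` and `a i = b i` for all `i < j`. -/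
def LexLt {A : Type} (lt : A → A → Prop) {k : ℕ} (a b : Fin k → A) : Prop :=
  ∃ j : Fin k, lt (a j) (b j) ∧ ∀ i : Fin k, i < j → a i = b i

/-- `dIdxM le a b` is, by definition, `sInf {p | ShiftDominated le a b p}`. -/
def ShiftDominated {A : Type} (le : A → A → Prop) {k : ℕ} (a b : Fin k → A) (p : ℕ) : Prop :=
  ∀ (i : Fin k) (h : (i : ℕ) + p < k), le (a i) (b ⟨i + p, h⟩) ∧ le (b i) (a ⟨i + p, h⟩)

section ShiftDominated

variable {A : Type} {le : A → A → Prop} {k : ℕ} {a b c : Fin k → A} {p q : ℕ}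

theorem ShiftDominated.symm (h : ShiftDominated le a b p) : ShiftDominated le b a p :=
  fun i hi => (h i hi).symm

theorem shiftDominated_zero (hrefl : ∀ x, le x x) (a : Fin k → A) : ShiftDominated le a a 0 :=
  fun i _ => ⟨hrefl (a i), hrefl (a i)⟩

theorem ShiftDominated.eq_of_zero (hanti : ∀ x y, le x y → le y x → x = y)
    (h : ShiftDominated le a b 0) : a = b :=
  funext fun i => hanti _ _ (h i i.2).1 (h i i.2).2

theorem ShiftDominated.add (htrans : ∀ x y z, le x y → le y z → le x z)
    (hab : ShiftDominated le a b p) (hbc : ShiftDominated le b c q) :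
    ShiftDominated le a c (p + q) := by
  intro i hi
  have hbc' := hbc ⟨i + p, by omega⟩ (by simp only; omega)
  have hba' := hab ⟨i + q, by omega⟩ (by simp only; omega)
  simp only [add_assoc, add_comm q p] at hbc' hba'
  exact ⟨htrans _ _ _ (hab i (by omega)).1 hbc'.1, htrans _ _ _ (hbc i (by omega)).2 hba'.2⟩

theorem shiftDominated_length (a b : Fin k → A) : ShiftDominated le a b k :=
  fun _ h => absurd h (by omega)

theorem shiftDominated_dIdxM (a b : Fin k → A) : ShiftDominated le a b (dIdxM le a b) :=
  Nat.sInf_mem (s := {p | ShiftDominated le a b p}) ⟨k, shiftDominated_length a b⟩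

theorem dIdxM_le_of_shiftDominated (h : ShiftDominated le a b p) : dIdxM le a b ≤ p :=
  Nat.sInf_le h

theorem dIdxM_self (hrefl : ∀ x, le x x) (a : Fin k → A) : dIdxM le a a = 0 :=
  Nat.le_zero.1 (dIdxM_le_of_shiftDominated (shiftDominated_zero hrefl a))

theorem dIdxM_comm (a b : Fin k → A) : dIdxM le a b = dIdxM le b a :=
  le_antisymm (dIdxM_le_of_shiftDominated (shiftDominated_dIdxM b a).symm)
    (dIdxM_le_of_shiftDominated (shiftDominated_dIdxM a b).symm)

theorem eq_of_dIdxM_eq_zero (hanti : ∀ x y, le x y → le y x → x = y)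
    (h : dIdxM le a b = 0) : a = b :=
  (h ▸ shiftDominated_dIdxM a b).eq_of_zero hanti

theorem dIdxM_le_add (htrans : ∀ x y z, le x y → le y z → le x z) (a b c : Fin k → A) :
    dIdxM le a c ≤ dIdxM le a b + dIdxM le b c :=
  dIdxM_le_of_shiftDominated ((shiftDominated_dIdxM a b).add htrans (shiftDominated_dIdxM b c))

end ShiftDominated

/-- Unlike `Tight` itself, this allows `p + q` to overshoot the last index `ℓ`. -/
theorem Tight.le_add {l : ℕ} {t : Fin (l + 1) → ℝ} (ht : Tight l t) (hmono : Monotone t)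
    (p q r : Fin (l + 1)) (hr : (r : ℕ) ≤ p + q) : t r ≤ t p + t q := by
  wlog hpq : p ≤ q generalizing p q
  · rw [add_comm]; exact this q p (by omega) (le_of_not_ge hpq)
  by_cases hl : (p : ℕ) + q ≤ l
  · calc t r ≤ t ⟨p + q, by omega⟩ := hmono (Fin.mk_le_mk.2 hr)
      _ ≤ t p + t q := ht p q hpq hl
  · -- `ℓ = (ℓ - q) + q` with `ℓ - q < p`
    have hk := ht (l - q) q (by omega) (by omega)
    simp only [Nat.sub_add_cancel (show (q : ℕ) ≤ l by omega)] at hk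
    calc t r ≤ t (Fin.last l) := hmono (Fin.le_last r)
      _ ≤ t ⟨l - q, by omega⟩ + t q := hk
      _ ≤ t p + t q := by gcongr; exact hmono (Fin.mk_le_mk.2 (by omega))

section dMet

variable {A : Type} {le : A → A → Prop} {k : ℕ} {s : Fin (k + 1) → ℝ}

theorem dMet_self (hrefl : ∀ x, le x x) (hs0 : s 0 = 0) (a : Fin k → A) : dMet le s a a = 0 := by
  simp only [dMet, dIdxM_self hrefl, Fin.mk_zero', hs0]

theorem eq_of_dMet_eq_zero (hanti : ∀ x y, le x y → le y x → x = y) (hs0 : s 0 = 0)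
    (hs : Function.Injective s) {a b : Fin k → A} (h : dMet le s a b = 0) : a = b :=
  eq_of_dIdxM_eq_zero hanti (congrArg Fin.val (hs (h.trans hs0.symm)))

theorem dMet_comm (a b : Fin k → A) : dMet le s a b = dMet le s b a := by
  simp only [dMet, dIdxM_comm a b]

theorem dMet_le_add (htrans : ∀ x y z, le x y → le y z → le x z) (ht : Tight k s)
    (hs : Monotone s) (a b c : Fin k → A) : dMet le s a c ≤ dMet le s a b + dMet le s b c :=
  ht.le_add hs _ _ _ (dIdxM_le_add htrans a b c)

end dMet

section LexLt

variable {A : Type} {lt : A → A → Prop} {k : ℕ}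

theorem lexLt_iff_piLex {a b : Fin k → A} : LexLt lt a b ↔ Pi.Lex (· < ·) lt a b :=
  exists_congr fun _ => and_comm

theorem LexLt.irrefl (hirrefl : ∀ x, ¬ lt x x) (a : Fin k → A) : ¬ LexLt lt a a :=
  fun ⟨j, hj, _⟩ => hirrefl (a j) hj

theorem LexLt.trans (htrans : ∀ x y z, lt x y → lt y z → lt x z) {a b c : Fin k → A}
    (hab : LexLt lt a b) (hbc : LexLt lt b c) : LexLt lt a c := by
  obtain ⟨j, hj, hj_eq⟩ := hab
  obtain ⟨j', hj', hj'_eq⟩ := hbc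
  rcases lt_trichotomy j j' with h | rfl | h
  · exact ⟨j, hj'_eq j h ▸ hj, fun i hi => (hj_eq i hi).trans (hj'_eq i (hi.trans h))⟩
  · exact ⟨j, htrans _ _ _ hj hj', fun i hi => (hj_eq i hi).trans (hj'_eq i hi)⟩
  · exact ⟨j', (hj_eq j' h).symm ▸ hj', fun i hi => (hj_eq i (hi.trans h)).trans (hj'_eq i hi)⟩

theorem LexLt.trichotomous (htotal : ∀ x y, lt x y ∨ x = y ∨ lt y x) (a b : Fin k → A) :
    LexLt lt a b ∨ a = b ∨ LexLt lt b a := by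
  have : Std.Trichotomous lt :=
    trichotomous_def.2 fun x y hxy hyx => ((htotal x y).resolve_left hxy).resolve_right hyx
  have := Pi.trichotomous_lex (β := fun _ : Fin k => A) (· < ·) (@fun _ => lt) wellFounded_lt
  simpa only [lexLt_iff_piLex] using _root_.trichotomous a b

end LexLt

theorem powerPoset_is_ordMetric_general
    (k : ℕ) (s : Fin (k + 1) → ℝ) (hs0 : s 0 = 0) (hs : StrictMono s)
    (htight : Tight k s)
    (A : Type)
    (le : A → A → Prop)
    (le_refl : ∀ a, le a a)
    (le_antisymm : ∀ a b, le a b → le b a → a = b)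
    (le_trans : ∀ a b c, le a b → le b c → le a c)
    (lt : A → A → Prop)
    (lt_irrefl : ∀ a, ¬ lt a a)
    (lt_trans : ∀ a b c, lt a b → lt b c → lt a c)
    (lt_total : ∀ a b, lt a b ∨ a = b ∨ lt b a) :
    -- d is a metric
    (∀ a : Fin k → A, dMet le s a a = 0) ∧
    (∀ a b : Fin k → A, dMet le s a b = 0 → a = b) ∧
    (∀ a b : Fin k → A, dMet le s a b = dMet le s b a) ∧
    (∀ a b c : Fin k → A, dMet le s a c ≤ dMet le s a b + dMet le s b c) ∧
    -- ≺_lex is a strict linear order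
    (∀ a : Fin k → A, ¬ LexLt lt a a) ∧
    (∀ a b c : Fin k → A, LexLt lt a b → LexLt lt b c → LexLt lt a c) ∧
    (∀ a b : Fin k → A, LexLt lt a b ∨ a = b ∨ LexLt lt b a) ∧
    -- all distances lie in S
    (∀ a b : Fin k → A, dMet le s a b ∈ Set.range s) :=
  ⟨dMet_self le_refl hs0,
    fun _ _ => eq_of_dMet_eq_zero le_antisymm hs0 hs.injective,
    dMet_comm,
    dMet_le_add le_trans htight hs.monotone,
    LexLt.irrefl lt_irrefl,
    fun _ _ _ => LexLt.trans lt_trans,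
    LexLt.trichotomous lt_total,
    fun _ _ => ⟨_, rfl⟩⟩

/-- Let `S = {0 = s_0 < s_1 < … < s_k}` be a finite tight set of nonnegative reals and let
`(A, ⊑, ≺)` be a finite linearly ordered poset.  Then `(A^k, d, ≺_lex)`, with
`d(ā, b̄) = s_j` for `j = min{p : a_i ⊑ b_{i+p} ∧ b_i ⊑ a_{i+p} for all i ≤ k-1-p}`
(`min ∅ = k`), is a finite linearly ordered metric space all of whose distances lie in `S`. -/
theorem powerPoset_is_ordMetric
    (k : ℕ) (s : Fin (k + 1) → ℝ) (hs0 : s 0 = 0) (hs : StrictMono s)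
    (htight : Tight k s)
    (A : Type) (hA : Finite A)
    (le : A → A → Prop)
    (le_refl : ∀ a, le a a)
    (le_antisymm : ∀ a b, le a b → le b a → a = b)
    (le_trans : ∀ a b c, le a b → le b c → le a c)
    (lt : A → A → Prop)
    (lt_irrefl : ∀ a, ¬ lt a a)
    (lt_trans : ∀ a b c, lt a b → lt b c → lt a c)
    (lt_total : ∀ a b, lt a b ∨ a = b ∨ lt b a)
    (lt_extends : ∀ a b, le a b → a ≠ b → lt a b) :
    -- d is a metric
    (∀ a : Fin k → A, dMet le s a a = 0) ∧
    (∀ a b : Fin k → A, dMet le s a b = 0 → a = b) ∧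
    (∀ a b : Fin k → A, dMet le s a b = dMet le s b a) ∧
    (∀ a b c : Fin k → A, dMet le s a c ≤ dMet le s a b + dMet le s b c) ∧
    -- ≺_lex is a strict linear order
    (∀ a : Fin k → A, ¬ LexLt lt a a) ∧
    (∀ a b c : Fin k → A, LexLt lt a b → LexLt lt b c → LexLt lt a c) ∧
    (∀ a b : Fin k → A, LexLt lt a b ∨ a = b ∨ LexLt lt b a) ∧
    -- all distances lie in S
    (∀ a b : Fin k → A, dMet le s a b ∈ Set.range s) :=
  powerPoset_is_ordMetric_general k s hs0 hs htight A le le_refl le_antisymm le_trans lt lt_irrefl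
    lt_trans lt_total
end

section
/- Let S = {0 = s_0 < s_1 < … < s_k} be a finite tight set of nonnegative reals and let (M, d, <) be a finite linearly ordered metric space with all distances in S. On M × {0, 1, …, k} define (x, i) ⊑ (y, j) iff i ≤ j and d(x, y) ≤ s_j − s_i, and define (x, i) ≺ (y, j) iff i < j, or i = j and x < y. Then ⊑ is a partial order on M × {0, 1, …, k}, ≺ is a strict linear order, and ≺ extends ⊑ (if (x,i) ⊑ (y,j) and (x,i) ≠ (y,j) then (x,i) ≺ (y,j)); hence (M × {0, 1, …, k}, ⊑, ≺) is a finite linearly ordered poset. -/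
/-- The partial order on `M × {0, 1, …, k}`: `(x, i) ⊑ (y, j)` iff `i ≤ j` and
`d(x, y) ≤ s_j − s_i`. -/
def PairLe {M : Type} {k : ℕ} (d : M → M → ℝ) (s : Fin (k + 1) → ℝ)
    (p q : M × Fin (k + 1)) : Prop :=
  p.2 ≤ q.2 ∧ d p.1 q.1 ≤ s q.2 - s p.2

/-- The linear order on `M × {0, 1, …, k}`: `(x, i) ≺ (y, j)` iff `i < j`, or `i = j`
and `x < y`. -/
def PairLt {M : Type} {k : ℕ} (ltM : M → M → Prop) (p q : M × Fin (k + 1)) : Prop :=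
  p.2 < q.2 ∨ (p.2 = q.2 ∧ ltM p.1 q.1)

/-- Let `S = {0 = s_0 < s_1 < … < s_k}` be a finite tight set of nonnegative reals and let
`(M, d, <)` be a finite linearly ordered metric space with all distances in `S`.
Then on `M × {0, 1, …, k}`, `⊑` is a partial order, `≺` is a strict linear order, and `≺`
extends `⊑`; hence `(M × {0, 1, …, k}, ⊑, ≺)` is a finite linearly ordered poset. -/
theorem pairPoset_is_linearlyOrderedPoset
    (k : ℕ) (s : Fin (k + 1) → ℝ) (hs0 : s 0 = 0) (hs : StrictMono s)
    (htight : Tight k s)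
    (M : Type) (hM : Finite M)
    (d : M → M → ℝ)
    (dist_self : ∀ x, d x x = 0)
    (eq_of_dist_eq_zero : ∀ x y, d x y = 0 → x = y)
    (dist_comm : ∀ x y, d x y = d y x)
    (triangle : ∀ x y z, d x z ≤ d x y + d y z)
    (ltM : M → M → Prop)
    (lt_irrefl : ∀ x, ¬ ltM x x)
    (lt_trans : ∀ x y z, ltM x y → ltM y z → ltM x z)
    (lt_total : ∀ x y, ltM x y ∨ x = y ∨ ltM y x)
    (hspec : ∀ x y, ∃ i, d x y = s i) :
    -- ⊑ is a partial order
    (∀ p : M × Fin (k + 1), PairLe d s p p) ∧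
    (∀ p q : M × Fin (k + 1), PairLe d s p q → PairLe d s q p → p = q) ∧
    (∀ p q r : M × Fin (k + 1), PairLe d s p q → PairLe d s q r → PairLe d s p r) ∧
    -- ≺ is a strict linear order
    (∀ p : M × Fin (k + 1), ¬ PairLt ltM p p) ∧
    (∀ p q r : M × Fin (k + 1), PairLt ltM p q → PairLt ltM q r → PairLt ltM p r) ∧
    (∀ p q : M × Fin (k + 1), PairLt ltM p q ∨ p = q ∨ PairLt ltM q p) ∧
    -- ≺ extends ⊑
    (∀ p q : M × Fin (k + 1), PairLe d s p q → p ≠ q → PairLt ltM p q) := by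

  have dnn : ∀ x y, 0 ≤ d x y := by
    intro x y
    have := triangle x y x
    rw [dist_self x, dist_comm y x] at this
    linarith
  refine ⟨?_, ?_, ?_, ?_, ?_, ?_, ?_⟩
  · intro p
    exact ⟨le_refl _, by rw [dist_self]; simp⟩
  · intro p q ⟨h1, h2⟩ ⟨h3, h4⟩
    have hij : p.2 = q.2 := le_antisymm h1 h3
    have hd : d p.1 q.1 = 0 := le_antisymm (by rw [hij] at h2; simpa using h2) (dnn _ _)
    have := eq_of_dist_eq_zero _ _ hd
    exact Prod.ext this hij
  · intro p q r ⟨h1, h2⟩ ⟨h3, h4⟩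
    refine ⟨le_trans h1 h3, ?_⟩
    have := triangle p.1 q.1 r.1
    linarith
  · intro p h
    rcases h with h | ⟨_, h⟩
    · exact absurd h (_root_.lt_irrefl _)
    · exact lt_irrefl _ h
  · intro p q r h1 h2
    rcases h1 with h1 | ⟨e1, h1⟩ <;> rcases h2 with h2 | ⟨e2, h2⟩
    · exact Or.inl (h1.trans h2)
    · exact Or.inl (e2 ▸ h1)
    · exact Or.inl (e1 ▸ h2)
    · exact Or.inr ⟨e1.trans e2, lt_trans _ _ _ h1 h2⟩
  · intro p q
    rcases _root_.lt_trichotomy p.2 q.2 with h | h | h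
    · exact Or.inl (Or.inl h)
    · rcases lt_total p.1 q.1 with hx | hx | hx
      · exact Or.inl (Or.inr ⟨h, hx⟩)
      · exact Or.inr (Or.inl (Prod.ext hx h))
      · exact Or.inr (Or.inr (Or.inr ⟨h.symm, hx⟩))
    · exact Or.inr (Or.inr (Or.inl h))
  · intro p q ⟨h1, h2⟩ hne
    rcases _root_.lt_or_eq_of_le h1 with h | h
    · exact Or.inl h
    · have hd : d p.1 q.1 = 0 := le_antisymm (by rw [h] at h2; simpa using h2) (dnn _ _)
      exact absurd (Prod.ext (eq_of_dist_eq_zero _ _ hd) h) hne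
end

section
/- Let A = ({1, 2, …, k}, ⊑, <) be a finite linearly ordered poset where < is the usual order on integers, let D_1 <_alex D_2 <_alex … <_alex D_m be the list of all nonempty downsets of (A, ⊑) in increasing anti-lexicographic order, and let u ∈ W^n_m({0}) be an m-parameter word of length n over the one-letter alphabet {0}. For 1 ≤ i ≤ m put X_i = u^{-1}(x_i), and for 1 ≤ i ≤ k put a_i = ⋃{X_α : i ∈ D_α}. Then the map i ↦ a_i is an embedding of A into the linearly ordered poset (P({1, …, n}), ⊇, <_lexbar): it preserves and reflects the order (i ⊑ j iff a_i ⊇ a_j), and i < j implies a_i <_lexbar a_j. -/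
/-- `D` is a downset of the partial order `le`. -/
def IsDownset {k : ℕ} (le : Fin k → Fin k → Prop) (D : Finset (Fin k)) : Prop :=
  ∀ x ∈ D, ∀ y, le y x → y ∈ D

/-- The anti-lexicographic order on finite subsets of a linear order:
`X <_alex Y` iff `X ⊂ Y`, or `max (X \ Y) < max (Y \ X)` when `X` and `Y` are
incomparable. -/
def AltLexF {α : Type} [LinearOrder α] (X Y : Finset α) : Prop :=
  X ⊂ Y ∨ (¬ X ⊆ Y ∧ ¬ Y ⊆ X ∧ (X \ Y).max < (Y \ X).max)

/-- The complemented lexicographic order on finite subsets of a linear order: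
`X <_lexbar Y` iff `X ⊃ Y`, or `min (X \ Y) < min (Y \ X)` when `X` and `Y` are
incomparable. -/
def LexBarF {α : Type} [LinearOrder α] (X Y : Finset α) : Prop :=
  Y ⊂ X ∨ (¬ X ⊆ Y ∧ ¬ Y ⊆ X ∧ (X \ Y).min < (Y \ X).min)

lemma sdiff_congr {α : Type} (d₁ d₂ : DecidableEq α) (s t : Finset α) :
    @SDiff.sdiff _ (@Finset.instSDiff _ d₁) s t = @SDiff.sdiff _ (@Finset.instSDiff _ d₂) s t := by
  rw [Subsingleton.elim d₁ d₂]

/-- Let `A = ({1, …, k}, ⊑, <)` be a finite linearly ordered poset (carrier `Fin k`, the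
usual order `<` of `Fin k` extending `⊑`), let `D_1 <_alex … <_alex D_m` enumerate all
nonempty downsets of `(A, ⊑)` in increasing anti-lexicographic order, and let
`u ∈ W^n_m({0})` be an `m`-parameter word of length `n` over the one-letter alphabet.
With `X_α = u⁻¹(x_α)` and `a_i = ⋃ {X_α : i ∈ D_α}`, the map `i ↦ a_i` is an embedding of
`A` into the linearly ordered poset `(P({1, …, n}), ⊇, <_lexbar)`: it is injective, it
preserves and reflects the order (`i ⊑ j` iff `a_i ⊇ a_j`), and `i < j` implies
`a_i <_lexbar a_j`. -/
theorem downsetWord_embedding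
    (k n m : ℕ)
    (le : Fin k → Fin k → Prop)
    (le_refl : ∀ a, le a a)
    (le_antisymm : ∀ a b, le a b → le b a → a = b)
    (le_trans : ∀ a b c, le a b → le b c → le a c)
    (lt_extends : ∀ a b, le a b → a ≤ b)
    (D : Fin m → Finset (Fin k))
    (hD : ∀ α, (D α).Nonempty ∧ IsDownset le (D α))
    (hDmono : ∀ α β : Fin m, α < β → AltLexF (D α) (D β))
    (hDall : ∀ E : Finset (Fin k), E.Nonempty → IsDownset le E → ∃ α, D α = E)
    (u : Fin n → Unit ⊕ Fin m) (hu : IsParamWord u)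
    (a : Fin k → Finset (Fin n))
    (ha : ∀ (i : Fin k) (p : Fin n), p ∈ a i ↔ ∃ α, u p = Sum.inr α ∧ i ∈ D α) :
    Function.Injective a ∧
    (∀ i j : Fin k, le i j ↔ a j ⊆ a i) ∧
    (∀ i j : Fin k, i < j → LexBarF (a i) (a j)) := by
  -- forward direction
  have hfwd : ∀ i j, le i j → a j ⊆ a i := by
    intro i j hij p hp
    rw [ha] at hp ⊢
    obtain ⟨α, hα, hjα⟩ := hp
    exact ⟨α, hα, (hD α).2 j hjα i hij⟩
  -- reverse direction
  have hrev : ∀ i j, a j ⊆ a i → le i j := by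
    intro i j hsub
    obtain ⟨α, hα⟩ := hDall (@Finset.filter _ (fun y => le y j) (fun _ => Classical.dec _) Finset.univ)
      ⟨j, by simp [le_refl]⟩
      (by
        intro x hx y hyx
        simp only [Finset.mem_filter, Finset.mem_univ, true_and] at hx ⊢
        exact le_trans _ _ _ hyx hx)
    obtain ⟨p, hp⟩ := hu.1 α
    have hpj : p ∈ a j := (ha j p).2 ⟨α, hp, by rw [hα]; simp [le_refl]⟩
    have hpi := hsub hpj
    rw [ha] at hpi
    obtain ⟨β, hβ, hiβ⟩ := hpi
    have hab : α = β := Sum.inr.inj (hp.symm.trans hβ)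
    rw [← hab, hα] at hiβ
    simpa using hiβ
  -- asymmetry of AltLexF
  have alex_asymm : ∀ X Y : Finset (Fin k), AltLexF X Y → AltLexF Y X → False := by
    intro X Y h1 h2
    rcases h1 with h1 | ⟨h1a, h1b, h1c⟩
    · rcases h2 with h2 | ⟨h2a, h2b, _⟩
      · exact ssubset_irrefl X (h1.trans h2)
      · exact h2b h1.subset
    · rcases h2 with h2 | ⟨_, _, h2c⟩
      · exact h1b h2.subset
      · exact lt_irrefl _ (h1c.trans h2c)
  have hidx : ∀ γ β : Fin m, AltLexF (D γ) (D β) → γ < β := by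
    intro γ β h
    rcases lt_trichotomy γ β with h' | h' | h'
    · exact h'
    · subst h'; exact absurd h (fun hh => alex_asymm _ _ hh hh)
    · exact absurd h (fun hh => alex_asymm _ _ (hDmono _ _ h') hh)
  -- key lemma for the incomparable case
  have key : ∀ (i j : Fin k), i < j → ∀ β : Fin m, j ∈ D β → i ∉ D β →
      ∃ γ : Fin m, γ < β ∧ i ∈ D γ ∧ j ∉ D γ := by
    intro i j hij β hjβ hiβ
    set E : Finset (Fin k) :=
      (@Finset.filter _ (fun x => ¬ le j x) (fun _ => Classical.dec _) (D β)) ∪ (@Finset.filter _ (fun y => le y i) (fun _ => Classical.dec _) Finset.univ) with hE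
    have hiE : i ∈ E := by simp [hE, le_refl]
    have hjE : j ∉ E := by
      simp only [hE, Finset.mem_union, Finset.mem_filter, Finset.mem_univ, true_and,
        not_or, not_and]
      constructor
      · intro _ hc; exact hc (le_refl j)
      · intro hji
        exact absurd (lt_extends _ _ hji) (not_le.2 hij)
    have hEdown : IsDownset le E := by
      intro x hx y hyx
      simp only [hE, Finset.mem_union, Finset.mem_filter, Finset.mem_univ, true_and] at hx ⊢
      rcases hx with ⟨hx1, hx2⟩ | hx2
      · exact Or.inl ⟨(hD β).2 x hx1 y hyx, fun hjy => hx2 (le_trans _ _ _ hjy hyx)⟩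
      · exact Or.inr (le_trans _ _ _ hyx hx2)
    obtain ⟨γ, hγ⟩ := hDall E ⟨i, hiE⟩ hEdown
    have hiγ : i ∈ D γ := hγ ▸ hiE
    have hjγ : j ∉ D γ := hγ ▸ hjE
    refine ⟨γ, hidx γ β ?_, hiγ, hjγ⟩
    -- AltLexF (D γ) (D β)
    rw [hγ]
    have hnotsub : ¬ D β ⊆ E := fun h => hjE (h hjβ)
    by_cases hsub : E ⊆ D β
    · exact Or.inl ⟨hsub, hnotsub⟩
    · refine Or.inr ⟨hsub, hnotsub, ?_⟩
      simp only [sdiff_congr _ (instDecidableEqFin k)]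
      have hlt : ∀ x ∈ E \ D β, x < j := by
        intro x hx
        rw [Finset.mem_sdiff] at hx
        have := hx.1
        simp only [hE, Finset.mem_union, Finset.mem_filter, Finset.mem_univ, true_and] at this
        rcases this with ⟨h1, _⟩ | h2
        · exact absurd h1 hx.2
        · exact lt_of_le_of_lt (lt_extends _ _ h2) hij
      have hne : (E \ D β).Nonempty := Finset.sdiff_nonempty.2 hsub
      have hjmem : j ∈ D β \ E := Finset.mem_sdiff.2 ⟨hjβ, hjE⟩
      have h3 : (E \ D β).max < (j : WithBot (Fin k)) := by
        rw [← Finset.coe_max' hne]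
        exact_mod_cast hlt _ (Finset.max'_mem _ hne)
      exact lt_of_lt_of_le h3 (Finset.le_max hjmem)
  -- the iff
  have hiff : ∀ i j : Fin k, le i j ↔ a j ⊆ a i := fun i j => ⟨hfwd i j, hrev i j⟩
  have hnle : ∀ i j : Fin k, i < j → ¬ le j i := by
    intro i j hij hc
    exact absurd (lt_extends _ _ hc) (not_le.2 hij)
  refine ⟨?_, hiff, ?_⟩
  · intro i j hij
    exact le_antisymm i j (hrev i j (hij ▸ subset_rfl)) (hrev j i (hij ▸ subset_rfl))
  · intro i j hij
    by_cases hle : le i j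
    · left
      rw [Finset.ssubset_def]
      refine ⟨hfwd i j hle, fun hcon => ?_⟩
      exact absurd (le_antisymm i j hle (hrev j i hcon)) (ne_of_lt hij)
    · right
      have hnle' : ¬ le j i := hnle i j hij
      have h1 : ¬ a i ⊆ a j := fun h => hnle' (hrev j i h)
      have h2 : ¬ a j ⊆ a i := fun h => hle (hrev i j h)
      refine ⟨h1, h2, ?_⟩
      simp only [sdiff_congr _ (instDecidableEqFin n)]
      have hneY : (a j \ a i).Nonempty := Finset.sdiff_nonempty.2 h2
      set q := (a j \ a i).min' hneY with hq
      have hqmem : q ∈ a j \ a i := Finset.min'_mem _ hneY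
      rw [Finset.mem_sdiff] at hqmem
      obtain ⟨β, hβ, hjβ⟩ := (ha j q).1 hqmem.1
      have hiβ : i ∉ D β := fun hc => hqmem.2 ((ha i q).2 ⟨β, hβ, hc⟩)
      obtain ⟨γ, hγβ, hiγ, hjγ⟩ := key i j hij β hjβ hiβ
      obtain ⟨p, hpq, hp⟩ := hu.2 γ β hγβ q hβ
      have hpmem : p ∈ a i \ a j := by
        rw [Finset.mem_sdiff]
        refine ⟨(ha i p).2 ⟨γ, hp, hiγ⟩, fun hc => ?_⟩
        obtain ⟨δ, hδ, hjδ⟩ := (ha j p).1 hc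
        rw [Sum.inr.inj (hp.symm.trans hδ)] at hjγ
        exact hjγ hjδ
      have h3 : (a i \ a j).min < (q : WithTop (Fin n)) :=
        lt_of_le_of_lt (Finset.min_le hpmem) (by exact_mod_cast hpq)
      rw [← Finset.coe_min' hneY]
      exact h3
end
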